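/- arXiv:1212.0851 — 4 statements merged into one kernel-verified Lean document; each statement's English description precedes it below -/
import Mathlib

section
/- Let G₁ be an r₁-regular graph with n₁ vertices and m₁ edges, and G₂ an arbitrary graph on n₂ vertices. Then the adjacency characteristic polynomial of the subdivision-vertex neighbourhood corona G₁ ⊡ G₂ equals x^{m₁−n₁} · φ(A(G₂); x)^{n₁} · ∏_{i=1}^{n₁} ( x² − (1 + x·Γ_{A(G₂)}(x)) (λ_i(G₁) + r₁) ), where λ_i(G₁) are the adjacency eigenvalues of G₁. -/
open scoped Classical

noncomputable def coronal {n : Type*} [Fintype n] (M : Matrix n n ℝ) (x : ℝ) : ℝ :=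
  ∑ i, ∑ j, (x • (1 : Matrix n n ℝ) - M)⁻¹ i j

/-- The subdivision-vertex neighbourhood corona `G₁ ⊡ G₂`. -/
def svnCorona {V₁ V₂ : Type*} (G₁ : SimpleGraph V₁) (G₂ : SimpleGraph V₂) :
    SimpleGraph (V₁ ⊕ (↑G₁.edgeSet ⊕ V₁ × V₂)) :=
  SimpleGraph.fromRel (fun a b =>
    (∃ v e, a = Sum.inl v ∧ b = Sum.inr (Sum.inl e) ∧ v ∈ (e : Sym2 V₁)) ∨
    (∃ e i u, a = Sum.inr (Sum.inl e) ∧ b = Sum.inr (Sum.inr (i, u)) ∧ i ∈ (e : Sym2 V₁)) ∨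
    (∃ i u w, a = Sum.inr (Sum.inr (i, u)) ∧ b = Sum.inr (Sum.inr (i, w)) ∧ G₂.Adj u w))

namespace SVNAux

open Matrix

set_option linter.unusedSectionVars false

variable {V₁ V₂ : Type*} [Fintype V₁] [Fintype V₂] {G₁ : SimpleGraph V₁} {G₂ : SimpleGraph V₂}

lemma adj_iff₁ (v w : V₁) : ¬ (svnCorona G₁ G₂).Adj (.inl v) (.inl w) := by
  unfold svnCorona; rw [SimpleGraph.fromRel_adj]
  rintro ⟨hne, (⟨_,_,h1,h2,h3⟩|⟨_,_,_,h1,h2,h3⟩|⟨_,_,_,h1,h2,h3⟩)|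
      (⟨_,_,h1,h2,h3⟩|⟨_,_,_,h1,h2,h3⟩|⟨_,_,_,h1,h2,h3⟩)⟩ <;> simp_all

lemma adj_iff₂ (v : V₁) (e : ↑G₁.edgeSet) :
    (svnCorona G₁ G₂).Adj (.inl v) (.inr (.inl e)) ↔ v ∈ (e : Sym2 V₁) := by
  unfold svnCorona; rw [SimpleGraph.fromRel_adj]
  constructor
  · rintro ⟨hne, (⟨_,_,h1,h2,h3⟩|⟨_,_,_,h1,h2,h3⟩|⟨_,_,_,h1,h2,h3⟩)|
      (⟨_,_,h1,h2,h3⟩|⟨_,_,_,h1,h2,h3⟩|⟨_,_,_,h1,h2,h3⟩)⟩ <;> simp_all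
  · intro h
    exact ⟨by simp, Or.inl <| Or.inl ⟨v, e, rfl, rfl, h⟩⟩

lemma adj_iff₃ (v : V₁) (q : V₁ × V₂) : ¬ (svnCorona G₁ G₂).Adj (.inl v) (.inr (.inr q)) := by
  unfold svnCorona; rw [SimpleGraph.fromRel_adj]
  rintro ⟨hne, (⟨_,_,h1,h2,h3⟩|⟨_,_,_,h1,h2,h3⟩|⟨_,_,_,h1,h2,h3⟩)|
      (⟨_,_,h1,h2,h3⟩|⟨_,_,_,h1,h2,h3⟩|⟨_,_,_,h1,h2,h3⟩)⟩ <;> simp_all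

lemma adj_iff₄ (e f : ↑G₁.edgeSet) : ¬ (svnCorona G₁ G₂).Adj (.inr (.inl e)) (.inr (.inl f)) := by
  unfold svnCorona; rw [SimpleGraph.fromRel_adj]
  rintro ⟨hne, (⟨_,_,h1,h2,h3⟩|⟨_,_,_,h1,h2,h3⟩|⟨_,_,_,h1,h2,h3⟩)|
      (⟨_,_,h1,h2,h3⟩|⟨_,_,_,h1,h2,h3⟩|⟨_,_,_,h1,h2,h3⟩)⟩ <;> simp_all

lemma adj_iff₅ (e : ↑G₁.edgeSet) (q : V₁ × V₂) :
    (svnCorona G₁ G₂).Adj (.inr (.inl e)) (.inr (.inr q)) ↔ q.1 ∈ (e : Sym2 V₁) := by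
  obtain ⟨i, u⟩ := q
  unfold svnCorona; rw [SimpleGraph.fromRel_adj]
  constructor
  · rintro ⟨hne, (⟨_,_,h1,h2,h3⟩|⟨_,_,_,h1,h2,h3⟩|⟨_,_,_,h1,h2,h3⟩)|
      (⟨_,_,h1,h2,h3⟩|⟨_,_,_,h1,h2,h3⟩|⟨_,_,_,h1,h2,h3⟩)⟩ <;> simp_all [Prod.ext_iff]
  · intro h
    exact ⟨by simp, Or.inl <| Or.inr <| Or.inl ⟨e, i, u, rfl, rfl, h⟩⟩

lemma adj_iff₆ (p q : V₁ × V₂) :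
    (svnCorona G₁ G₂).Adj (.inr (.inr p)) (.inr (.inr q)) ↔ p.1 = q.1 ∧ G₂.Adj p.2 q.2 := by
  obtain ⟨i, u⟩ := p; obtain ⟨j, w⟩ := q
  unfold svnCorona
  rw [SimpleGraph.fromRel_adj]
  constructor
  · rintro ⟨hne, (⟨_,_,h1,h2,h3⟩|⟨_,_,_,h1,h2,h3⟩|⟨_,_,_,h1,h2,h3⟩)|
      (⟨_,_,h1,h2,h3⟩|⟨_,_,_,h1,h2,h3⟩|⟨_,_,_,h1,h2,h3⟩)⟩ <;>
      simp_all [Prod.ext_iff, G₂.adj_comm]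
  · rintro ⟨rfl, h⟩
    exact ⟨by simp [Prod.ext_iff]; rintro rfl; exact G₂.loopless.irrefl _ h,
      Or.inl <| Or.inr <| Or.inr ⟨i, u, w, rfl, rfl, h⟩⟩

lemma adj_iff₂' (v : V₁) (e : ↑G₁.edgeSet) :
    (svnCorona G₁ G₂).Adj (.inr (.inl e)) (.inl v) ↔ v ∈ (e : Sym2 V₁) := by
  rw [SimpleGraph.adj_comm]; exact adj_iff₂ v e

lemma adj_iff₃' (v : V₁) (q : V₁ × V₂) : ¬ (svnCorona G₁ G₂).Adj (.inr (.inr q)) (.inl v) := by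
  rw [SimpleGraph.adj_comm]; exact adj_iff₃ v q

lemma adj_iff₅' (e : ↑G₁.edgeSet) (q : V₁ × V₂) :
    (svnCorona G₁ G₂).Adj (.inr (.inr q)) (.inr (.inl e)) ↔ q.1 ∈ (e : Sym2 V₁) := by
  rw [SimpleGraph.adj_comm]; exact adj_iff₅ e q

variable (G₁) in
noncomputable def Rm : Matrix V₁ ↑G₁.edgeSet ℝ :=
  Matrix.of fun v e => if v ∈ (e : Sym2 V₁) then 1 else 0

variable (G₁) in
noncomputable def Cm (V₂ : Type*) : Matrix ↑G₁.edgeSet (V₁ × V₂) ℝ :=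
  Matrix.of fun e p => if p.1 ∈ (e : Sym2 V₁) then 1 else 0

variable (G₂) in
noncomputable def Km (V₁ : Type*) : Matrix (V₁ × V₂) (V₁ × V₂) ℝ :=
  Matrix.of fun p q => if p.1 = q.1 then (G₂.adjMatrix ℝ) p.2 q.2 else 0

lemma key_decomp (x : ℝ) :
    x • (1 : Matrix (V₁ ⊕ (↑G₁.edgeSet ⊕ V₁ × V₂)) (V₁ ⊕ (↑G₁.edgeSet ⊕ V₁ × V₂)) ℝ)
      - (svnCorona G₁ G₂).adjMatrix ℝ =
    fromBlocks (x • 1) (-(fromCols (Rm G₁) 0))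
      (-(fromRows (Rm G₁)ᵀ 0))
      (fromBlocks (x • 1) (-(Cm G₁ V₂)) (-(Cm G₁ V₂)ᵀ) (x • 1 - Km G₂ V₁)) := by
  ext a b
  rcases a with v | e | p <;> rcases b with w | f | q <;>
    simp [Matrix.one_apply, Rm, Cm, Km, adj_iff₁, adj_iff₂, adj_iff₃, adj_iff₄, adj_iff₅,
      adj_iff₆, adj_iff₂', adj_iff₃', adj_iff₅', Prod.ext_iff, ite_and]

lemma Rm_mul_transpose {r₁ : ℕ} (hreg : G₁.IsRegularOfDegree r₁) :
    Rm G₁ * (Rm G₁)ᵀ = G₁.adjMatrix ℝ + (r₁ : ℝ) • 1 := by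
  ext v w
  rw [Matrix.mul_apply]
  by_cases hvw : v = w
  · subst hvw
    simp only [Rm, Matrix.of_apply, transpose_apply, SimpleGraph.adjMatrix_apply,
      Matrix.add_apply, Matrix.smul_apply, Matrix.one_apply_eq, SimpleGraph.irrefl, if_false,
      smul_eq_mul, mul_one, zero_add]
    have : ∀ e : ↑G₁.edgeSet, (if v ∈ (e : Sym2 V₁) then (1:ℝ) else 0) *
        (if v ∈ (e : Sym2 V₁) then 1 else 0) = if v ∈ (e : Sym2 V₁) then 1 else 0 := by
      intro e; split <;> simp
    rw [Finset.sum_congr rfl fun e _ => this e, Finset.sum_boole]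
    have hcard : (Finset.univ.filter fun e : ↑G₁.edgeSet => v ∈ (e : Sym2 V₁)).card
        = G₁.degree v := by
      rw [← SimpleGraph.card_incidenceSet_eq_degree]
      rw [← Fintype.card_subtype]
      apply Fintype.card_congr
      exact ⟨fun e => ⟨e.1.1, e.1.2, e.2⟩, fun s => ⟨⟨s.1, s.2.1⟩, s.2.2⟩,
        fun e => rfl, fun s => rfl⟩
    rw [hcard, hreg v]
  · simp only [Rm, Matrix.of_apply, transpose_apply, SimpleGraph.adjMatrix_apply,
      Matrix.add_apply, Matrix.smul_apply, Matrix.one_apply_ne hvw, smul_eq_mul, mul_zero,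
      add_zero]
    by_cases hadj : G₁.Adj v w
    · rw [if_pos hadj]
      have hmem : (⟨s(v,w), hadj⟩ : ↑G₁.edgeSet) ∈ (Finset.univ : Finset ↑G₁.edgeSet) :=
        Finset.mem_univ _
      rw [Finset.sum_eq_single_of_mem _ hmem]
      · simp
      · intro e _ hne
        rcases Classical.em (v ∈ (e : Sym2 V₁) ∧ w ∈ (e : Sym2 V₁)) with h | h
        · exact absurd (Subtype.ext ((Sym2.mem_and_mem_iff hvw).1 h)) hne
        · rcases Classical.em (v ∈ (e : Sym2 V₁)) with h1 | h1 <;>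
            rcases Classical.em (w ∈ (e : Sym2 V₁)) with h2 | h2 <;> simp_all
    · rw [if_neg hadj]
      apply Finset.sum_eq_zero
      intro e _
      rcases Classical.em (v ∈ (e : Sym2 V₁) ∧ w ∈ (e : Sym2 V₁)) with h | h
      · exfalso
        have := (Sym2.mem_and_mem_iff hvw).1 h
        apply hadj
        have he := e.2
        rw [this] at he
        exact (SimpleGraph.mem_edgeSet G₁).1 he
      · rcases Classical.em (v ∈ (e : Sym2 V₁)) with h1 | h1 <;>
          rcases Classical.em (w ∈ (e : Sym2 V₁)) with h2 | h2 <;> simp_all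

lemma Km_rep (x : ℝ) :
    x • (1 : Matrix (V₁ × V₂) (V₁ × V₂) ℝ) - Km G₂ V₁ =
      (blockDiagonal fun _ : V₁ => x • (1 : Matrix V₂ V₂ ℝ) - G₂.adjMatrix ℝ).submatrix
        (Equiv.prodComm V₁ V₂) (Equiv.prodComm V₁ V₂) := by
  ext ⟨i, u⟩ ⟨j, w⟩
  by_cases hij : i = j <;>
    simp [Km, blockDiagonal_apply, Matrix.one_apply, Prod.ext_iff, hij]

lemma bd_sub_rep (B : Matrix V₂ V₂ ℝ) :
    ((blockDiagonal fun _ : V₁ => B).submatrix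
        (Equiv.prodComm V₁ V₂) (Equiv.prodComm V₁ V₂) : Matrix (V₁ × V₂) (V₁ × V₂) ℝ) =
      Matrix.of fun p q => if p.1 = q.1 then B p.2 q.2 else 0 := by
  ext ⟨i, u⟩ ⟨j, w⟩
  by_cases hij : i = j <;> simp [blockDiagonal_apply, hij]

lemma CKC (B : Matrix V₂ V₂ ℝ) :
    Cm G₁ V₂ * ((blockDiagonal fun _ : V₁ => B).submatrix
        (Equiv.prodComm V₁ V₂) (Equiv.prodComm V₁ V₂)) * (Cm G₁ V₂)ᵀ =
      (∑ i, ∑ j, B i j) • ((Rm G₁)ᵀ * Rm G₁) := by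
  rw [bd_sub_rep]
  ext e f
  simp only [Matrix.mul_apply, Matrix.smul_apply, Cm, Rm, Matrix.of_apply, transpose_apply,
    Fintype.sum_prod_type, smul_eq_mul]
  simp only [ite_mul, mul_ite, one_mul, zero_mul, mul_one, mul_zero,
    Finset.sum_ite_eq, Finset.sum_ite_eq', Finset.mem_univ, if_true]
  rw [Finset.mul_sum]
  congr 1
  ext i
  by_cases h1 : i ∈ (e : Sym2 V₁) <;> by_cases h2 : i ∈ (f : Sym2 V₁)
  · simp only [h1, h2, if_true, mul_one]
    have key : ∀ x : V₂, (∑ x_1 : V₁, ∑ x_2 : V₂,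
        if x_1 = i then if x_1 ∈ (e : Sym2 V₁) then B x_2 x else 0 else 0)
        = ∑ x_2 : V₂, B x_2 x := by
      intro x
      rw [Finset.sum_eq_single i (fun b _ hb => by simp [hb]) (by simp)]
      simp [h1]
    rw [Finset.sum_congr rfl fun x _ => key x]
    exact Finset.sum_comm (s := Finset.univ) (t := Finset.univ) (f := fun x x₂ => B x₂ x)
  all_goals simp [h1, h2, Finset.sum_ite_eq']

lemma det_step4 {r₁ : ℕ} (α : ℕ → ℝ)
    (hα : ∀ x : ℝ, (x • (1 : Matrix V₁ V₁ ℝ) - G₁.adjMatrix ℝ).det =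
      ∏ i ∈ Finset.range (Fintype.card V₁), (x - α i)) (c x : ℝ) :
    (x • (1 : Matrix V₁ V₁ ℝ) - c • (G₁.adjMatrix ℝ + (r₁ : ℝ) • 1)).det =
      ∏ i ∈ Finset.range (Fintype.card V₁), (x - c * (α i + r₁)) := by
  rcases eq_or_ne c 0 with rfl | hc
  · simp [Matrix.det_smul, Finset.prod_const]
  · have key : x • (1 : Matrix V₁ V₁ ℝ) - c • (G₁.adjMatrix ℝ + (r₁ : ℝ) • 1) =
        c • (((x - c * r₁) / c) • (1 : Matrix V₁ V₁ ℝ) - G₁.adjMatrix ℝ) := by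
      rw [smul_sub, smul_smul, smul_add, smul_smul]
      rw [mul_div_cancel₀ _ hc]
      ext i j
      simp [Matrix.sub_apply, Matrix.add_apply, Matrix.smul_apply]
      ring
    rw [key, Matrix.det_smul, hα ((x - c * r₁) / c)]
    have hcc : c ^ Fintype.card V₁ = ∏ _i ∈ Finset.range (Fintype.card V₁), c := by
      rw [Finset.prod_const, Finset.card_range]
    rw [hcc, ← Finset.prod_mul_distrib]
    refine Finset.prod_congr rfl fun i _ => ?_
    field_simp
    ring

lemma det_step3 (x c : ℝ) (hx0 : x ≠ 0) :
    x ^ (Fintype.card V₁) *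
        (x • (1 : Matrix ↑G₁.edgeSet ↑G₁.edgeSet ℝ) - c • ((Rm G₁)ᵀ * Rm G₁)).det =
      x ^ (Fintype.card ↑G₁.edgeSet) *
        (x • (1 : Matrix V₁ V₁ ℝ) - c • (Rm G₁ * (Rm G₁)ᵀ)).det := by
  have e1 : x • (1 : Matrix ↑G₁.edgeSet ↑G₁.edgeSet ℝ) - c • ((Rm G₁)ᵀ * Rm G₁) =
      x • (1 + (Rm G₁)ᵀ * ((-(c/x)) • Rm G₁)) := by
    rw [Matrix.mul_smul, smul_add, smul_smul]
    rw [show x * -(c/x) = -c by field_simp [mul_comm]]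
    rw [neg_smul, ← sub_eq_add_neg]
  have e2 : x • (1 : Matrix V₁ V₁ ℝ) - c • (Rm G₁ * (Rm G₁)ᵀ) =
      x • (1 + ((-(c/x)) • Rm G₁) * (Rm G₁)ᵀ) := by
    rw [Matrix.smul_mul, smul_add, smul_smul]
    rw [show x * -(c/x) = -c by field_simp [mul_comm]]
    rw [neg_smul, ← sub_eq_add_neg]
  rw [e1, e2, Matrix.det_smul, Matrix.det_smul]
  rw [Matrix.det_one_add_mul_comm]
  ring

end SVNAux

open SVNAux Matrix in
theorem stmt5_ne {V₁ V₂ : Type*} [Fintype V₁] [Fintype V₂]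
    (G₁ : SimpleGraph V₁) (G₂ : SimpleGraph V₂) (r₁ : ℕ)
    (hreg : G₁.IsRegularOfDegree r₁)
    (hmn : Fintype.card V₁ ≤ Fintype.card ↑G₁.edgeSet)
    (α : ℕ → ℝ)
    (hα : ∀ x : ℝ, (x • (1 : Matrix V₁ V₁ ℝ) - G₁.adjMatrix ℝ).det =
      ∏ i ∈ Finset.range (Fintype.card V₁), (x - α i))
    (x : ℝ) (hx0 : x ≠ 0)
    (hx : (x • (1 : Matrix V₂ V₂ ℝ) - G₂.adjMatrix ℝ).det ≠ 0) :
    (x • (1 : Matrix _ _ ℝ) - (svnCorona G₁ G₂).adjMatrix ℝ).det =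
      x ^ (Fintype.card ↑G₁.edgeSet - Fintype.card V₁) *
      ((x • (1 : Matrix V₂ V₂ ℝ) - G₂.adjMatrix ℝ).det) ^ (Fintype.card V₁) *
      ∏ i ∈ Finset.range (Fintype.card V₁),
        (x ^ 2 - (1 + x * coronal (G₂.adjMatrix ℝ) x) * (α i + r₁)) := by
  set A₂ := G₂.adjMatrix ℝ with hA₂
  set N := x • (1 : Matrix V₂ V₂ ℝ) - A₂ with hN
  set n₁ := Fintype.card V₁ with hn₁
  set m := Fintype.card ↑G₁.edgeSet with hm
  set Γ := coronal A₂ x with hΓ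
  -- invertibility of x • 1 on V₁
  haveI inst1 : Invertible (x • (1 : Matrix V₁ V₁ ℝ)) :=
    ⟨x⁻¹ • (1 : Matrix V₁ V₁ ℝ),
      by rw [Matrix.smul_mul, Matrix.mul_smul, smul_smul, one_mul, inv_mul_cancel₀ hx0, one_smul],
      by rw [Matrix.smul_mul, Matrix.mul_smul, smul_smul, one_mul, mul_inv_cancel₀ hx0, one_smul]⟩
  haveI instN : Invertible N := Matrix.invertibleOfIsUnitDet _ (isUnit_iff_ne_zero.2 hx)
  -- invertibility of x • 1 - Km
  set KInv : Matrix (V₁ × V₂) (V₁ × V₂) ℝ :=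
    (blockDiagonal fun _ : V₁ => N⁻¹).submatrix (Equiv.prodComm V₁ V₂) (Equiv.prodComm V₁ V₂)
    with hKInv
  have hNN : N * N⁻¹ = 1 := Matrix.mul_nonsing_inv _ (isUnit_iff_ne_zero.2 hx)
  have hNN' : N⁻¹ * N = 1 := Matrix.nonsing_inv_mul _ (isUnit_iff_ne_zero.2 hx)
  have hKrep := Km_rep (G₂ := G₂) (V₁ := V₁) x
  rw [← hN] at hKrep
  have hKmul' : KInv * (x • (1 : Matrix (V₁ × V₂) (V₁ × V₂) ℝ) - Km G₂ V₁) = 1 := by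
    rw [hKrep, hKInv, submatrix_mul_equiv, ← blockDiagonal_mul]
    have h1 : (fun _ : V₁ => N⁻¹ * N) = (1 : V₁ → Matrix V₂ V₂ ℝ) := by
      funext k; exact hNN'
    rw [h1, blockDiagonal_one]
    exact submatrix_one_equiv _
  have hKmul : (x • (1 : Matrix (V₁ × V₂) (V₁ × V₂) ℝ) - Km G₂ V₁) * KInv = 1 := by
    rw [hKrep, hKInv, submatrix_mul_equiv, ← blockDiagonal_mul]
    have h1 : (fun _ : V₁ => N * N⁻¹) = (1 : V₁ → Matrix V₂ V₂ ℝ) := by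
      funext k; exact hNN
    rw [h1, blockDiagonal_one]
    exact submatrix_one_equiv _
  haveI instK : Invertible (x • (1 : Matrix (V₁ × V₂) (V₁ × V₂) ℝ) - Km G₂ V₁) :=
    ⟨KInv, hKmul', hKmul⟩
  have hdetK : (x • (1 : Matrix (V₁ × V₂) (V₁ × V₂) ℝ) - Km G₂ V₁).det = N.det ^ n₁ := by
    rw [hKrep, det_submatrix_equiv_self, det_blockDiagonal, Finset.prod_const, Finset.card_univ]
  -- step 1 : outer Schur complement
  rw [key_decomp x, Matrix.det_fromBlocks₁₁]
  have hinv1 : (⅟ (x • (1 : Matrix V₁ V₁ ℝ))) = x⁻¹ • (1 : Matrix V₁ V₁ ℝ) :=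
    invOf_eq_right_inv (by
      rw [Matrix.smul_mul, Matrix.mul_smul, smul_smul, one_mul, mul_inv_cancel₀ hx0, one_smul])
  have hcor : (-(fromRows (Rm G₁)ᵀ (0 : Matrix (V₁ × V₂) V₁ ℝ))) * (⅟ (x • (1 : Matrix V₁ V₁ ℝ))) *
      (-(fromCols (Rm G₁) (0 : Matrix V₁ (V₁ × V₂) ℝ))) =
      fromBlocks (x⁻¹ • ((Rm G₁)ᵀ * Rm G₁)) 0 0 0 := by
    rw [hinv1, Matrix.neg_mul, Matrix.neg_mul, Matrix.mul_neg, neg_neg, Matrix.mul_smul, Matrix.mul_one,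
      Matrix.smul_mul, fromRows_mul_fromCols]
    rw [Matrix.mul_zero, Matrix.zero_mul, Matrix.zero_mul, fromBlocks_smul]
    simp
  rw [hcor]
  have hsub : fromBlocks (x • (1 : Matrix ↑G₁.edgeSet ↑G₁.edgeSet ℝ)) (-(Cm G₁ V₂))
        (-(Cm G₁ V₂)ᵀ) (x • 1 - Km G₂ V₁) -
        fromBlocks (x⁻¹ • ((Rm G₁)ᵀ * Rm G₁)) 0 0 0 =
      fromBlocks (x • 1 - x⁻¹ • ((Rm G₁)ᵀ * Rm G₁)) (-(Cm G₁ V₂))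
        (-(Cm G₁ V₂)ᵀ) (x • 1 - Km G₂ V₁) := by
    ext a b
    rcases a with e | p <;> rcases b with f | q <;> simp [fromBlocks]
  rw [hsub, Matrix.det_fromBlocks₂₂]
  have hinvK : (⅟ (x • (1 : Matrix (V₁ × V₂) (V₁ × V₂) ℝ) - Km G₂ V₁)) = KInv :=
    invOf_eq_right_inv hKmul
  have hcor2 : (-(Cm G₁ V₂)) * (⅟ (x • (1 : Matrix (V₁ × V₂) (V₁ × V₂) ℝ) - Km G₂ V₁)) *
      (-(Cm G₁ V₂)ᵀ) = Γ • ((Rm G₁)ᵀ * Rm G₁) := by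
    rw [hinvK, Matrix.neg_mul, Matrix.neg_mul, Matrix.mul_neg, neg_neg, hKInv, CKC]
    rfl
  rw [hcor2]
  have hschur2 : x • (1 : Matrix ↑G₁.edgeSet ↑G₁.edgeSet ℝ) - x⁻¹ • ((Rm G₁)ᵀ * Rm G₁) -
      Γ • ((Rm G₁)ᵀ * Rm G₁) = x • 1 - (x⁻¹ + Γ) • ((Rm G₁)ᵀ * Rm G₁) := by
    rw [add_smul]; abel
  rw [hschur2, hdetK]
  -- now use step3 and step4
  set c := x⁻¹ + Γ with hc
  have h3 := det_step3 (G₁ := G₁) x c hx0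
  have h4 : (x • (1 : Matrix V₁ V₁ ℝ) - c • (Rm G₁ * (Rm G₁)ᵀ)).det =
      ∏ i ∈ Finset.range n₁, (x - c * (α i + r₁)) := by
    rw [Rm_mul_transpose hreg]
    exact det_step4 α hα c x
  have hdet1 : (x • (1 : Matrix V₁ V₁ ℝ)).det = x ^ n₁ := by
    rw [Matrix.det_smul, Matrix.det_one, mul_one, hn₁]
  rw [hdet1]
  -- compute det (x•1 - c•(RᵀR))
  have hD3 : (x • (1 : Matrix ↑G₁.edgeSet ↑G₁.edgeSet ℝ) - c • ((Rm G₁)ᵀ * Rm G₁)).det =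
      x ^ (m - n₁) * ∏ i ∈ Finset.range n₁, (x - c * (α i + r₁)) := by
    have hxn : (x : ℝ) ^ n₁ ≠ 0 := pow_ne_zero _ hx0
    have hm' : x ^ m = x ^ (m - n₁) * x ^ n₁ := by
      rw [← pow_add, Nat.sub_add_cancel hmn]
    rw [h4, hm'] at h3
    apply mul_left_cancel₀ hxn
    rw [h3]; ring
  rw [hD3]
  have hxc : x * c = 1 + x * Γ := by
    rw [hc, mul_add, mul_inv_cancel₀ hx0]
  have hprod : x ^ n₁ * ∏ i ∈ Finset.range n₁, (x - c * (α i + r₁)) =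
      ∏ i ∈ Finset.range n₁, (x ^ 2 - (1 + x * Γ) * (α i + r₁)) := by
    have hxx : x ^ n₁ = ∏ _i ∈ Finset.range n₁, x := by
      rw [Finset.prod_const, Finset.card_range]
    rw [hxx, ← Finset.prod_mul_distrib]
    refine Finset.prod_congr rfl fun i _ => ?_
    rw [← hxc]; ring
  calc x ^ n₁ * (N.det ^ n₁ * (x ^ (m - n₁) * ∏ i ∈ Finset.range n₁, (x - c * (α i + r₁))))
      = x ^ (m - n₁) * N.det ^ n₁ *
        (x ^ n₁ * ∏ i ∈ Finset.range n₁, (x - c * (α i + r₁))) := by ring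
    _ = _ := by rw [hprod]

theorem stmt5 {V₁ V₂ : Type*} [Fintype V₁] [Fintype V₂]
    (G₁ : SimpleGraph V₁) (G₂ : SimpleGraph V₂) (r₁ : ℕ)
    (hreg : G₁.IsRegularOfDegree r₁)
    (hmn : Fintype.card V₁ ≤ Fintype.card ↑G₁.edgeSet)
    (α : ℕ → ℝ)
    (hα : ∀ x : ℝ, (x • (1 : Matrix V₁ V₁ ℝ) - G₁.adjMatrix ℝ).det =
      ∏ i ∈ Finset.range (Fintype.card V₁), (x - α i))
    (x : ℝ) (hx : (x • (1 : Matrix V₂ V₂ ℝ) - G₂.adjMatrix ℝ).det ≠ 0) :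
    (x • (1 : Matrix _ _ ℝ) - (svnCorona G₁ G₂).adjMatrix ℝ).det =
      x ^ (Fintype.card ↑G₁.edgeSet - Fintype.card V₁) *
      ((x • (1 : Matrix V₂ V₂ ℝ) - G₂.adjMatrix ℝ).det) ^ (Fintype.card V₁) *
      ∏ i ∈ Finset.range (Fintype.card V₁),
        (x ^ 2 - (1 + x * coronal (G₂.adjMatrix ℝ) x) * (α i + r₁)) := by
  classical
  set A₂ := G₂.adjMatrix ℝ with hA₂
  set n₁ := Fintype.card V₁ with hn₁
  set m := Fintype.card ↑G₁.edgeSet with hm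
  set q : ℝ → ℝ := fun y => ∑ i, ∑ j, (y • (1 : Matrix V₂ V₂ ℝ) - A₂).adjugate i j with hq
  have hcor : ∀ y : ℝ, (y • (1 : Matrix V₂ V₂ ℝ) - A₂).det ≠ 0 →
      coronal A₂ y = q y / (y • (1 : Matrix V₂ V₂ ℝ) - A₂).det := by
    intro y hy
    rw [coronal, Matrix.inv_def]
    simp only [Matrix.smul_apply, smul_eq_mul, Ring.inverse_eq_inv]
    rw [div_eq_inv_mul, hq]; simp only [Finset.mul_sum]
  have hconv : ∀ y : ℝ, (y • (1 : Matrix V₂ V₂ ℝ) - A₂).det ≠ 0 →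
      y ^ (m - n₁) * ((y • (1 : Matrix V₂ V₂ ℝ) - A₂).det) ^ n₁ *
        ∏ i ∈ Finset.range n₁, (y ^ 2 - (1 + y * coronal A₂ y) * (α i + r₁)) =
      y ^ (m - n₁) *
        ∏ i ∈ Finset.range n₁, ((y • (1 : Matrix V₂ V₂ ℝ) - A₂).det * y ^ 2 -
          ((y • (1 : Matrix V₂ V₂ ℝ) - A₂).det + y * q y) * (α i + r₁)) := by
    intro y hy
    have hpow : ((y • (1 : Matrix V₂ V₂ ℝ) - A₂).det) ^ n₁ =
        ∏ _i ∈ Finset.range n₁, (y • (1 : Matrix V₂ V₂ ℝ) - A₂).det := by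
      rw [Finset.prod_const, Finset.card_range]
    rw [mul_assoc, hpow, ← Finset.prod_mul_distrib]
    congr 1
    refine Finset.prod_congr rfl fun i _ => ?_
    rw [hcor y hy]
    field_simp
  set P : ℝ → ℝ := fun y =>
    (y • (1 : Matrix (V₁ ⊕ (↑G₁.edgeSet ⊕ V₁ × V₂)) (V₁ ⊕ (↑G₁.edgeSet ⊕ V₁ × V₂)) ℝ)
      - (svnCorona G₁ G₂).adjMatrix ℝ).det with hP
  set Q : ℝ → ℝ := fun y => y ^ (m - n₁) *
      ∏ i ∈ Finset.range n₁, ((y • (1 : Matrix V₂ V₂ ℝ) - A₂).det * y ^ 2 -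
        ((y • (1 : Matrix V₂ V₂ ℝ) - A₂).det + y * q y) * (α i + r₁)) with hQ
  have hPQ : ∀ y : ℝ, y ≠ 0 → (y • (1 : Matrix V₂ V₂ ℝ) - A₂).det ≠ 0 → P y = Q y := by
    intro y hy0 hy
    have h1 := stmt5_ne G₁ G₂ r₁ hreg hmn α hα y hy0 hy
    simp only [hP, hQ]
    rw [h1]
    exact hconv y hy
  -- continuity
  have hmatc : Continuous fun y : ℝ => y • (1 : Matrix V₂ V₂ ℝ) - A₂ :=
    (continuous_id.smul continuous_const).sub continuous_const
  have hφc : Continuous fun y : ℝ => (y • (1 : Matrix V₂ V₂ ℝ) - A₂).det := hmatc.matrix_det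
  have hqc : Continuous q := by
    rw [hq]
    refine continuous_finset_sum _ fun i _ => continuous_finset_sum _ fun j _ => ?_
    exact (hmatc.matrix_adjugate).matrix_elem i j
  have hPc : Continuous P := by
    rw [hP]
    exact Continuous.matrix_det ((continuous_id.smul continuous_const).sub continuous_const)
  have hQc : Continuous Q := by
    rw [hQ]
    refine (continuous_pow _).mul (continuous_finset_prod _ fun i _ => ?_)
    exact ((hφc.mul (continuous_pow 2))).sub
      ((hφc.add (continuous_id.mul hqc)).mul continuous_const)
  rcases eq_or_ne x 0 with rfl | hx0
  · -- x = 0 : limit argument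
    have hev : ∀ᶠ y in nhdsWithin (0:ℝ) {(0:ℝ)}ᶜ, P y = Q y := by
      have h1 : ∀ᶠ y in nhds (0:ℝ), (y • (1 : Matrix V₂ V₂ ℝ) - A₂).det ≠ 0 :=
        hφc.continuousAt.eventually_ne hx
      filter_upwards [nhdsWithin_le_nhds h1, self_mem_nhdsWithin] with y hy1 hy2
      exact hPQ y hy2 hy1
    have ht1 : Filter.Tendsto P (nhdsWithin (0:ℝ) {(0:ℝ)}ᶜ) (nhds (P 0)) :=
      (hPc.continuousAt.tendsto).mono_left nhdsWithin_le_nhds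
    have ht2 : Filter.Tendsto P (nhdsWithin (0:ℝ) {(0:ℝ)}ᶜ) (nhds (Q 0)) :=
      ((hQc.continuousAt.tendsto).mono_left nhdsWithin_le_nhds).congr'
        (by filter_upwards [hev] with y hy using hy.symm)
    have hP0 : P 0 = Q 0 := tendsto_nhds_unique ht1 ht2
    calc ((0:ℝ) • (1 : Matrix _ _ ℝ) - (svnCorona G₁ G₂).adjMatrix ℝ).det = P 0 := rfl
      _ = Q 0 := hP0
      _ = _ := by simp only [hQ]; exact (hconv 0 hx).symm
  · exact stmt5_ne G₁ G₂ r₁ hreg hmn α hα x hx0 hx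
end

section
/- If G₁ and G₂ are adjacency-cospectral regular graphs (of the same degree and order), and H is any graph, then G₁ ⊡ H and G₂ ⊡ H are adjacency-cospectral. -/
open scoped Classical
set_option synthInstance.maxHeartbeats 1000000
set_option maxHeartbeats 2000000
set_option linter.unusedSectionVars false

namespace SVNAux

open Polynomial Matrix

noncomputable section

local notation "K" => RatFunc ℝ

def tt : K := algebraMap (Polynomial ℝ) (RatFunc ℝ) Polynomial.X

lemma tt_ne_zero : tt ≠ 0 := by
  simp only [tt, ne_eq, map_eq_zero_iff _ (RatFunc.algebraMap_injective ℝ)]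
  exact Polynomial.X_ne_zero

lemma algebraMap_eq_aeval (p : Polynomial ℝ) :
    algebraMap (Polynomial ℝ) (RatFunc ℝ) p = Polynomial.aeval tt p := by
  rw [tt, Polynomial.aeval_algebraMap_apply, Polynomial.aeval_X_left_apply]

lemma eval₂_charpoly {n : Type*} [Fintype n] [DecidableEq n] (M : Matrix n n ℝ) (z : K) :
    Polynomial.eval₂ (algebraMap ℝ (RatFunc ℝ)) z M.charpoly
      = (z • (1 : Matrix n n K) - M.map (algebraMap ℝ (RatFunc ℝ))).det := by
  rw [Matrix.charpoly, ← Polynomial.coe_eval₂RingHom, RingHom.map_det]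
  congr 1
  ext i j
  by_cases h : i = j
  · subst h
    simp [Matrix.charmatrix_apply_eq, Matrix.map_apply, Matrix.smul_apply, Matrix.one_apply,
      Matrix.sub_apply]
  · simp [Matrix.charmatrix_apply_ne _ _ _ h, Matrix.map_apply, Matrix.smul_apply,
      Matrix.one_apply_ne h, Matrix.sub_apply, h]

lemma phi_charpoly {n : Type*} [Fintype n] [DecidableEq n] (M : Matrix n n ℝ) :
    algebraMap (Polynomial ℝ) (RatFunc ℝ) M.charpoly
      = (tt • (1 : Matrix n n K) - M.map (algebraMap ℝ (RatFunc ℝ))).det := by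
  rw [algebraMap_eq_aeval, Polynomial.aeval_def, eval₂_charpoly]

lemma adjMatrix_map {V : Type*} (G : SimpleGraph V) :
    (G.adjMatrix ℝ).map (algebraMap ℝ (RatFunc ℝ)) = G.adjMatrix K := by
  ext i j
  simp [Matrix.map_apply, apply_ite]

section Kron

variable (V : Type*) {W : Type*}

def kron (M : Matrix W W K) : Matrix (V × W) (V × W) K :=
  fun p q => if p.1 = q.1 then M p.2 q.2 else 0

variable [Fintype V] [Fintype W]

lemma kron_mul (M N : Matrix W W K) : kron V M * kron V N = kron V (M * N) := by
  ext ⟨i, u⟩ ⟨j, w⟩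
  simp only [Matrix.mul_apply, kron, Fintype.sum_prod_type, ite_mul, mul_ite, zero_mul,
    mul_zero, Finset.sum_ite_eq, Finset.mem_univ, if_true]
  by_cases h : i = j <;> simp [h, Finset.sum_ite_eq]

lemma kron_one : kron V (1 : Matrix W W K) = 1 := by
  ext ⟨i, u⟩ ⟨j, w⟩
  simp only [kron, Matrix.one_apply, Prod.mk.injEq]
  by_cases h : i = j <;> by_cases h2 : u = w <;> simp [h, h2]

lemma kron_det (M : Matrix W W K) : (kron V M).det = M.det ^ Fintype.card V := by
  have h : kron V M
      = Matrix.reindex (Equiv.prodComm W V) (Equiv.prodComm W V)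
        (Matrix.blockDiagonal fun _ : V => M) := by
    ext ⟨i, u⟩ ⟨j, w⟩
    simp only [kron, Matrix.reindex_apply, Matrix.submatrix_apply, Equiv.prodComm_symm,
      Equiv.prodComm_apply, Prod.swap_prod_mk, Matrix.blockDiagonal_apply]
  rw [h, Matrix.det_reindex_self, Matrix.det_blockDiagonal, Finset.prod_const,
    Finset.card_univ]

lemma kron_inv (M : Matrix W W K) (h : IsUnit M.det) : (kron V M)⁻¹ = kron V M⁻¹ :=
  Matrix.inv_eq_right_inv (by rw [kron_mul, Matrix.mul_nonsing_inv _ h, kron_one])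

end Kron

section Graph

variable {V W : Type*} [Fintype V] [Fintype W]

def BM (G : SimpleGraph V) : Matrix V (↑G.edgeSet) K :=
  fun v e => if v ∈ (e : Sym2 V) then 1 else 0

def CM (G : SimpleGraph V) (W : Type*) : Matrix (↑G.edgeSet) (V × W) K :=
  fun e p => if p.1 ∈ (e : Sym2 V) then 1 else 0

lemma sum_edge_ite (G : SimpleGraph V) (i : V) :
    (∑ e : ↑G.edgeSet, (if i ∈ (e : Sym2 V) then (1:K) else 0)) = (G.degree i : K) := by
  rw [Finset.sum_set_coe (f := fun z : Sym2 V => if i ∈ z then (1:K) else 0)]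
  rw [Finset.sum_boole]
  congr 1
  rw [← SimpleGraph.card_incidenceFinset_eq_degree]
  congr 1
  ext z
  simp [SimpleGraph.mem_incidenceFinset, SimpleGraph.incidenceSet, Set.mem_toFinset]

lemma B_mul_Bt (G : SimpleGraph V) {r : ℕ} (hreg : G.IsRegularOfDegree r) :
    BM G * (BM G)ᵀ = G.adjMatrix K + (r : K) • (1 : Matrix V V K) := by
  ext i j
  simp only [Matrix.mul_apply, BM, Matrix.transpose_apply, Matrix.add_apply,
    Matrix.smul_apply, Matrix.one_apply, SimpleGraph.adjMatrix_apply, smul_eq_mul]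
  by_cases h : i = j
  · subst h
    have h1 : ∀ e : ↑G.edgeSet,
        (if i ∈ (e : Sym2 V) then (1:K) else 0) * (if i ∈ (e : Sym2 V) then (1:K) else 0)
          = if i ∈ (e : Sym2 V) then (1:K) else 0 := by
      intro e; by_cases he : i ∈ (e : Sym2 V) <;> simp [he]
    rw [Finset.sum_congr rfl fun e _ => h1 e, sum_edge_ite G i, hreg i]
    simp
  · have h1 : ∀ e : ↑G.edgeSet,
        (if i ∈ (e : Sym2 V) then (1:K) else 0) * (if j ∈ (e : Sym2 V) then (1:K) else 0)
          = if (e : Sym2 V) = s(i,j) then (1:K) else 0 := by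
      intro e
      by_cases h1 : i ∈ (e : Sym2 V) <;> by_cases h2 : j ∈ (e : Sym2 V)
      · rw [if_pos h1, if_pos h2, if_pos ((Sym2.mem_and_mem_iff h).1 ⟨h1, h2⟩), one_mul]
      · rw [if_neg h2, mul_zero, if_neg]
        intro he; exact h2 (he ▸ Sym2.mem_mk_right i j)
      · rw [if_neg h1, zero_mul, if_neg]
        intro he; exact h1 (he ▸ Sym2.mem_mk_left i j)
      · rw [if_neg h1, zero_mul, if_neg]
        intro he; exact h1 (he ▸ Sym2.mem_mk_left i j)
    rw [Finset.sum_congr rfl fun e _ => h1 e,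
      Finset.sum_set_coe (f := fun z : Sym2 V => if z = s(i,j) then (1:K) else 0),
      Finset.sum_ite_eq' _ (s(i,j)) (fun _ => (1:K))]
    simp [h, SimpleGraph.mem_edgeSet]

lemma C_kron_Ct (G : SimpleGraph V) (Z : Matrix W W K) :
    CM G W * kron V Z * (CM G W)ᵀ
      = (∑ u, ∑ w, Z u w) • ((BM G)ᵀ * BM G) := by
  ext e f
  have inner : ∀ (j : V) (w : W),
      (∑ q : V × W, (if q.1 ∈ (e : Sym2 V) then (1:K) else 0)
          * (if q.1 = j then Z q.2 w else 0))
        = (if j ∈ (e : Sym2 V) then (1:K) else 0) * ∑ u, Z u w := by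
    intro j w
    rw [Fintype.sum_prod_type, Finset.sum_comm]
    have h1 : ∀ u : W, (∑ i : V, (if i ∈ (e : Sym2 V) then (1:K) else 0)
        * (if i = j then Z u w else 0))
        = (if j ∈ (e : Sym2 V) then (1:K) else 0) * Z u w := by
      intro u
      have h2 : ∀ i : V, (if i ∈ (e : Sym2 V) then (1:K) else 0) * (if i = j then Z u w else 0)
          = if i = j then (if i ∈ (e : Sym2 V) then (1:K) else 0) * Z u w else 0 := by
        intro i; rw [mul_ite, mul_zero]
      rw [Finset.sum_congr rfl fun i _ => h2 i,
        Finset.sum_ite_eq' _ j (fun i => (if i ∈ (e : Sym2 V) then (1:K) else 0) * Z u w)]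
      simp
    rw [Finset.sum_congr rfl fun u _ => h1 u, ← Finset.mul_sum]
  simp only [Matrix.mul_apply, CM, kron, Matrix.transpose_apply, Matrix.smul_apply,
    smul_eq_mul, BM]
  calc (∑ q : V × W, (∑ p : V × W, (if p.1 ∈ (e : Sym2 V) then (1:K) else 0)
          * (if p.1 = q.1 then Z p.2 q.2 else 0)) * (if q.1 ∈ (f : Sym2 V) then (1:K) else 0))
      = ∑ j : V, ∑ w : W, ((if j ∈ (e : Sym2 V) then (1:K) else 0) * ∑ u, Z u w)
          * (if j ∈ (f : Sym2 V) then (1:K) else 0) := by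
        rw [Fintype.sum_prod_type]
        exact Finset.sum_congr rfl fun j _ => Finset.sum_congr rfl fun w _ => by
          rw [inner j w]
    _ = ∑ j : V, ((if j ∈ (e : Sym2 V) then (1:K) else 0)
          * (if j ∈ (f : Sym2 V) then (1:K) else 0)) * (∑ w : W, ∑ u, Z u w) := by
        refine Finset.sum_congr rfl fun j _ => ?_
        rw [Finset.mul_sum]
        exact Finset.sum_congr rfl fun w _ => by ring
    _ = (∑ u, ∑ w, Z u w) * ∑ j, (if j ∈ (e : Sym2 V) then (1:K) else 0)
          * (if j ∈ (f : Sym2 V) then (1:K) else 0) := by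
        rw [← Finset.sum_mul, mul_comm]
        congr 1
        rw [Finset.sum_comm]

end Graph

section Adj

variable {V W : Type*} (G : SimpleGraph V) (H : SimpleGraph W)

lemma svn_adj_inl_inl (v v' : V) : ¬ (svnCorona G H).Adj (Sum.inl v) (Sum.inl v') := by
  simp [svnCorona, SimpleGraph.fromRel_adj]

lemma svn_adj_inl_inrl (v : V) (e : ↑G.edgeSet) :
    (svnCorona G H).Adj (Sum.inl v) (Sum.inr (Sum.inl e)) ↔ v ∈ (e : Sym2 V) := by
  simp [svnCorona, SimpleGraph.fromRel_adj]

lemma svn_adj_inrl_inl (v : V) (e : ↑G.edgeSet) :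
    (svnCorona G H).Adj (Sum.inr (Sum.inl e)) (Sum.inl v) ↔ v ∈ (e : Sym2 V) := by
  rw [SimpleGraph.adj_comm]; exact svn_adj_inl_inrl G H v e

lemma svn_adj_inl_inrr (v : V) (p : V × W) :
    ¬ (svnCorona G H).Adj (Sum.inl v) (Sum.inr (Sum.inr p)) := by
  simp [svnCorona, SimpleGraph.fromRel_adj]

lemma svn_adj_inrr_inl (v : V) (p : V × W) :
    ¬ (svnCorona G H).Adj (Sum.inr (Sum.inr p)) (Sum.inl v) := by
  rw [SimpleGraph.adj_comm]; exact svn_adj_inl_inrr G H v p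

lemma svn_adj_inrl_inrl (e e' : ↑G.edgeSet) :
    ¬ (svnCorona G H).Adj (Sum.inr (Sum.inl e)) (Sum.inr (Sum.inl e')) := by
  simp [svnCorona, SimpleGraph.fromRel_adj]

lemma svn_adj_inrl_inrr (e : ↑G.edgeSet) (p : V × W) :
    (svnCorona G H).Adj (Sum.inr (Sum.inl e)) (Sum.inr (Sum.inr p)) ↔ p.1 ∈ (e : Sym2 V) := by
  rcases p with ⟨i, u⟩
  simp [svnCorona, SimpleGraph.fromRel_adj]

lemma svn_adj_inrr_inrl (e : ↑G.edgeSet) (p : V × W) :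
    (svnCorona G H).Adj (Sum.inr (Sum.inr p)) (Sum.inr (Sum.inl e)) ↔ p.1 ∈ (e : Sym2 V) := by
  rw [SimpleGraph.adj_comm]; exact svn_adj_inrl_inrr G H e p

lemma svn_adj_inrr_inrr (i j : V) (u w : W) :
    (svnCorona G H).Adj (Sum.inr (Sum.inr (i, u))) (Sum.inr (Sum.inr (j, w)))
      ↔ i = j ∧ H.Adj u w := by
  simp only [svnCorona, SimpleGraph.fromRel_adj, ne_eq]
  constructor
  · rintro ⟨hne, h | h⟩ <;>
      rcases h with ⟨a, b, h1, h2, h3⟩ | ⟨a, b, c, h1, h2, h3⟩ | ⟨a, b, c, h1, h2, h3⟩ <;>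
      simp only [Sum.inr.injEq, Prod.mk.injEq, reduceCtorEq, false_and, and_false] at h1 h2
    · obtain ⟨rfl, rfl⟩ := h1; obtain ⟨rfl, rfl⟩ := h2; exact ⟨rfl, h3⟩
    · obtain ⟨rfl, rfl⟩ := h1; obtain ⟨rfl, rfl⟩ := h2; exact ⟨rfl, h3.symm⟩
  · rintro ⟨rfl, hadj⟩
    exact ⟨by simp [hadj.ne], Or.inl (Or.inr (Or.inr ⟨i, u, w, rfl, rfl, hadj⟩))⟩

end Adj

section Main

variable {V W : Type*} [Fintype V] [Fintype W]

def sval (H : SimpleGraph W) : K :=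
  (∑ u, ∑ w, (tt • (1 : Matrix W W K) - H.adjMatrix K)⁻¹ u w) + tt⁻¹

lemma N_eq (G : SimpleGraph V) (H : SimpleGraph W) :
    tt • (1 : Matrix (V ⊕ (↑G.edgeSet ⊕ V × W)) (V ⊕ (↑G.edgeSet ⊕ V × W)) K)
        - (svnCorona G H).adjMatrix K
      = Matrix.fromBlocks (tt • 1) (Matrix.fromCols (-(BM G)) 0)
          (Matrix.fromRows (-(BM G)ᵀ) 0)
          (Matrix.fromBlocks (tt • 1) (-(CM G W)) (-(CM G W)ᵀ)
            (kron V (tt • (1 : Matrix W W K) - H.adjMatrix K))) := by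
  ext x y
  rcases x with v | e | ⟨i, u⟩ <;> rcases y with v' | e' | ⟨j, w⟩ <;>
    simp [Matrix.sub_apply, Matrix.smul_apply, Matrix.one_apply, BM, CM, kron,
      svn_adj_inl_inl, svn_adj_inl_inrl, svn_adj_inrl_inl, svn_adj_inl_inrr,
      svn_adj_inrr_inl, svn_adj_inrl_inrl, svn_adj_inrl_inrr, svn_adj_inrr_inrl,
      svn_adj_inrr_inrr, Matrix.fromBlocks_apply₁₁, Matrix.fromBlocks_apply₁₂,
      Matrix.fromBlocks_apply₂₁, Matrix.fromBlocks_apply₂₂,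
      Matrix.fromRows_apply_inl, Matrix.fromRows_apply_inr,
      Matrix.fromCols, Matrix.transpose_apply, Prod.ext_iff, smul_eq_mul,
      mul_ite, mul_one, mul_zero] <;>
    (try (by_cases hij : i = j <;> simp [hij]))

lemma inv_tt_smul_one {n : Type*} [Fintype n] [DecidableEq n] :
    (tt • (1 : Matrix n n K))⁻¹ = tt⁻¹ • 1 :=
  Matrix.inv_eq_right_inv (by
    rw [Matrix.smul_mul, Matrix.one_mul, smul_smul, mul_inv_cancel₀ tt_ne_zero, one_smul])

lemma det_tt_one {n : Type*} [Fintype n] [DecidableEq n] :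
    (tt • (1 : Matrix n n K)).det = tt ^ Fintype.card n := by
  rw [Matrix.det_smul, Matrix.det_one, mul_one]

lemma isUnit_det_tt_one {n : Type*} [Fintype n] [DecidableEq n] :
    IsUnit (tt • (1 : Matrix n n K)).det := by
  rw [det_tt_one]; exact isUnit_iff_ne_zero.2 (pow_ne_zero _ tt_ne_zero)

lemma chiH_det_ne (H : SimpleGraph W) :
    (tt • (1 : Matrix W W K) - H.adjMatrix K).det ≠ 0 := by
  rw [← adjMatrix_map, ← phi_charpoly]
  intro h
  exact (Matrix.charpoly_monic _).ne_zero
    ((map_eq_zero_iff _ (RatFunc.algebraMap_injective ℝ)).1 h)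

lemma sylvester {m n : Type*} [Fintype m] [Fintype n] [DecidableEq m] [DecidableEq n]
    (P : Matrix n m K) (s : K) :
    (tt • (1 : Matrix m m K) - s • (Pᵀ * P)).det
      = tt ^ Fintype.card m * ((1 : Matrix n n K) - (s * tt⁻¹) • (P * Pᵀ)).det := by
  have h : tt • (1 : Matrix m m K) - s • (Pᵀ * P)
      = tt • ((1 : Matrix m m K) + ((-(s * tt⁻¹)) • Pᵀ) * P) := by
    rw [Matrix.smul_mul, smul_add, smul_smul]
    rw [show tt * -(s * tt⁻¹) = -s by
      rw [mul_neg, mul_comm tt, mul_assoc, inv_mul_cancel₀ tt_ne_zero, mul_one]]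
    rw [neg_smul, ← sub_eq_add_neg]
  rw [h, Matrix.det_smul, Matrix.det_one_add_mul_comm, Matrix.mul_smul,
    neg_smul, ← sub_eq_add_neg]

lemma key (G : SimpleGraph V) (H : SimpleGraph W) (r : ℕ) (hreg : G.IsRegularOfDegree r) :
    algebraMap (Polynomial ℝ) (RatFunc ℝ) ((svnCorona G H).adjMatrix ℝ).charpoly
      = (tt • (1 : Matrix W W K) - H.adjMatrix K).det ^ Fintype.card V
          * tt ^ (Fintype.card V + Fintype.card ↑G.edgeSet)
          * ((1 : Matrix V V K) - (sval H * tt⁻¹) • (G.adjMatrix K + (r : K) • 1)).det := by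
  have hUAH : IsUnit (tt • (1 : Matrix W W K) - H.adjMatrix K).det :=
    isUnit_iff_ne_zero.2 (chiH_det_ne H)
  rw [phi_charpoly, adjMatrix_map, N_eq]
  letI : Invertible (tt • (1 : Matrix V V K)) := Matrix.invertibleOfIsUnitDet _ isUnit_det_tt_one
  letI : Invertible (kron V (tt • (1 : Matrix W W K) - H.adjMatrix K)) :=
    Matrix.invertibleOfIsUnitDet _ (by
      rw [kron_det]; exact isUnit_iff_ne_zero.2 (pow_ne_zero _ (chiH_det_ne H)))
  rw [Matrix.det_fromBlocks₁₁, Matrix.invOf_eq_nonsing_inv]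
  have hblock : (Matrix.fromBlocks (tt • 1) (-(CM G W)) (-(CM G W)ᵀ)
        (kron V (tt • (1 : Matrix W W K) - H.adjMatrix K)))
      - Matrix.fromRows (-(BM G)ᵀ) 0 * (tt • (1 : Matrix V V K))⁻¹
          * Matrix.fromCols (-(BM G)) 0
      = Matrix.fromBlocks (tt • 1 - tt⁻¹ • ((BM G)ᵀ * BM G)) (-(CM G W)) (-(CM G W)ᵀ)
          (kron V (tt • (1 : Matrix W W K) - H.adjMatrix K)) := by
    rw [inv_tt_smul_one, Matrix.fromRows_mul, Matrix.zero_mul,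
      Matrix.fromRows_mul_fromCols, Matrix.zero_mul, Matrix.mul_zero]
    rw [Matrix.mul_smul, Matrix.mul_one, Matrix.smul_mul, Matrix.neg_mul, Matrix.mul_neg,
      neg_neg]
    rw [sub_eq_add_neg, Matrix.fromBlocks_neg, Matrix.fromBlocks_add]
    simp [sub_eq_add_neg]
  rw [hblock, Matrix.det_fromBlocks₂₂, Matrix.invOf_eq_nonsing_inv]
  have hneg : (-(CM G W)) * (kron V (tt • (1 : Matrix W W K) - H.adjMatrix K))⁻¹
        * (-(CM G W)ᵀ)
      = (∑ u, ∑ w, (tt • (1 : Matrix W W K) - H.adjMatrix K)⁻¹ u w) • ((BM G)ᵀ * BM G) := by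
    rw [kron_inv _ _ hUAH, Matrix.neg_mul, Matrix.mul_neg, Matrix.neg_mul, neg_neg, C_kron_Ct]
  rw [hneg]
  have hinner : (tt • 1 - tt⁻¹ • ((BM G)ᵀ * BM G))
        - (∑ u, ∑ w, (tt • (1 : Matrix W W K) - H.adjMatrix K)⁻¹ u w) • ((BM G)ᵀ * BM G)
      = tt • (1 : Matrix (↑G.edgeSet) (↑G.edgeSet) K) - sval H • ((BM G)ᵀ * BM G) := by
    rw [sub_sub, ← add_smul, sval, add_comm tt⁻¹]
  rw [hinner, sylvester (BM G) (sval H), B_mul_Bt G hreg, kron_det, det_tt_one, pow_add]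
  ring

end Main

section Final

lemma edge_card_eq {V₁ V₂ : Type*} [Fintype V₁] [Fintype V₂]
    (G₁ : SimpleGraph V₁) (G₂ : SimpleGraph V₂) (r : ℕ)
    (h1 : G₁.IsRegularOfDegree r) (h2 : G₂.IsRegularOfDegree r)
    (hcard : Fintype.card V₁ = Fintype.card V₂) :
    Fintype.card ↑G₁.edgeSet = Fintype.card ↑G₂.edgeSet := by
  have e1 : 2 * G₁.edgeFinset.card = Fintype.card V₁ * r := by
    rw [← G₁.sum_degrees_eq_twice_card_edges,
      Finset.sum_congr rfl fun v _ => h1 v, Finset.sum_const, Finset.card_univ, smul_eq_mul]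
  have e2 : 2 * G₂.edgeFinset.card = Fintype.card V₂ * r := by
    rw [← G₂.sum_degrees_eq_twice_card_edges,
      Finset.sum_congr rfl fun v _ => h2 v, Finset.sum_const, Finset.card_univ, smul_eq_mul]
  have h3 : 2 * G₁.edgeFinset.card = 2 * G₂.edgeFinset.card := by
    rw [e1, e2, hcard]
  have h4 := Nat.eq_of_mul_eq_mul_left (by norm_num : 0 < 2) h3
  rw [SimpleGraph.edgeFinset_card, SimpleGraph.edgeFinset_card] at h4
  exact h4

lemma one_sub_smul_eq {V' : Type*} [Fintype V'] (G : SimpleGraph V') (c ρ : K) (hc : c ≠ 0) :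
    (1 : Matrix V' V' K) - c • (G.adjMatrix K + ρ • 1)
      = c • (((1 - c * ρ) / c) • (1 : Matrix V' V' K) - G.adjMatrix K) := by
  rw [smul_sub, smul_smul, mul_div_cancel₀ _ hc, sub_smul, one_smul, smul_add, smul_smul]
  abel

lemma det_one_sub_eq {V₁ V₂ : Type*} [Fintype V₁] [Fintype V₂]
    (G₁ : SimpleGraph V₁) (G₂ : SimpleGraph V₂)
    (hcard : Fintype.card V₁ = Fintype.card V₂)
    (hcosp : (G₁.adjMatrix ℝ).charpoly = (G₂.adjMatrix ℝ).charpoly) (c ρ : K) :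
    ((1 : Matrix V₁ V₁ K) - c • (G₁.adjMatrix K + ρ • 1)).det
      = ((1 : Matrix V₂ V₂ K) - c • (G₂.adjMatrix K + ρ • 1)).det := by
  by_cases hc : c = 0
  · simp [hc]
  · rw [one_sub_smul_eq G₁ c ρ hc, one_sub_smul_eq G₂ c ρ hc,
      Matrix.det_smul, Matrix.det_smul, hcard]
    congr 1
    rw [← adjMatrix_map, ← adjMatrix_map, ← eval₂_charpoly, ← eval₂_charpoly, hcosp]

end Final

end

end SVNAux

theorem stmt7 {V₁ V₂ W : Type*} [Fintype V₁] [Fintype V₂] [Fintype W]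
    (G₁ : SimpleGraph V₁) (G₂ : SimpleGraph V₂) (H : SimpleGraph W) (r : ℕ)
    (hreg₁ : G₁.IsRegularOfDegree r) (hreg₂ : G₂.IsRegularOfDegree r)
    (hcard : Fintype.card V₁ = Fintype.card V₂)
    (hcosp : (G₁.adjMatrix ℝ).charpoly = (G₂.adjMatrix ℝ).charpoly) :
    ((svnCorona G₁ H).adjMatrix ℝ).charpoly = ((svnCorona G₂ H).adjMatrix ℝ).charpoly := by
  apply RatFunc.algebraMap_injective ℝ
  rw [SVNAux.key G₁ H r hreg₁, SVNAux.key G₂ H r hreg₂, hcard,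
    SVNAux.edge_card_eq G₁ G₂ r hreg₁ hreg₂ hcard,
    SVNAux.det_one_sub_eq G₁ G₂ hcard hcosp]
end

section
/- Let G be an r-regular graph with r even, r ≥ 4, and let H be the edgeless graph on r/2 − 1 vertices. Then G ⊡ H is r-regular and its algebraic connectivity satisfies a(G ⊡ H) = r − √(r² − (r/2)·a(G)). -/
open scoped Classical

open Matrix Finset

section adj
variable {V W : Type*} (G : SimpleGraph V)

lemma svn_adj :
    ∀ a b, (svnCorona G (⊥ : SimpleGraph W)).Adj a b ↔
      ((∃ (v : V) (e : G.edgeSet), v ∈ (e : Sym2 V) ∧ a = Sum.inl v ∧ b = Sum.inr (Sum.inl e)) ∨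
       (∃ (v : V) (e : G.edgeSet), v ∈ (e : Sym2 V) ∧ b = Sum.inl v ∧ a = Sum.inr (Sum.inl e)) ∨
       (∃ (e : G.edgeSet) (i : V) (u : W), i ∈ (e : Sym2 V) ∧
          a = Sum.inr (Sum.inl e) ∧ b = Sum.inr (Sum.inr (i, u))) ∨
       (∃ (e : G.edgeSet) (i : V) (u : W), i ∈ (e : Sym2 V) ∧
          b = Sum.inr (Sum.inl e) ∧ a = Sum.inr (Sum.inr (i, u)))) := by
  intro a b
  constructor
  · rintro ⟨hne, h | h⟩
    · rcases h with ⟨v, e, rfl, rfl, hm⟩ | ⟨e, i, u, rfl, rfl, hm⟩ | ⟨i, u, w, rfl, rfl, hm⟩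
      · exact Or.inl ⟨v, e, hm, rfl, rfl⟩
      · exact Or.inr (Or.inr (Or.inl ⟨e, i, u, hm, rfl, rfl⟩))
      · exact absurd hm (by simp)
    · rcases h with ⟨v, e, rfl, rfl, hm⟩ | ⟨e, i, u, rfl, rfl, hm⟩ | ⟨i, u, w, rfl, rfl, hm⟩
      · exact Or.inr (Or.inl ⟨v, e, hm, rfl, rfl⟩)
      · exact Or.inr (Or.inr (Or.inr ⟨e, i, u, hm, rfl, rfl⟩))
      · exact absurd hm (by simp)
  · rintro (⟨v, e, hm, rfl, rfl⟩ | ⟨v, e, hm, rfl, rfl⟩ | ⟨e, i, u, hm, rfl, rfl⟩ |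
      ⟨e, i, u, hm, rfl, rfl⟩)
    · exact ⟨by simp, Or.inl (Or.inl ⟨v, e, rfl, rfl, hm⟩)⟩
    · exact ⟨by simp, Or.inr (Or.inl ⟨v, e, rfl, rfl, hm⟩)⟩
    · exact ⟨by simp, Or.inl (Or.inr (Or.inl ⟨e, i, u, rfl, rfl, hm⟩))⟩
    · exact ⟨by simp, Or.inr (Or.inr (Or.inl ⟨e, i, u, rfl, rfl, hm⟩))⟩

lemma svn_adj_inl_inl (v w : V) :
    ¬ (svnCorona G (⊥ : SimpleGraph W)).Adj (Sum.inl v) (Sum.inl w) := by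
  rw [svn_adj]; rintro (⟨_,_,_,h,_⟩|⟨_,_,_,_,h⟩|⟨_,_,_,_,h,_⟩|⟨_,_,_,_,_,h⟩) <;> simp_all

lemma svn_adj_inl_inrl (v : V) (e : G.edgeSet) :
    (svnCorona G (⊥ : SimpleGraph W)).Adj (Sum.inl v) (Sum.inr (Sum.inl e)) ↔
      v ∈ (e : Sym2 V) := by
  rw [svn_adj]
  constructor
  · rintro (⟨a,f,hm,h1,h2⟩|⟨_,_,_,_,h⟩|⟨_,_,_,_,h,_⟩|⟨_,_,_,_,_,h⟩) <;> simp_all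
  · intro hm; exact Or.inl ⟨v, e, hm, rfl, rfl⟩

lemma svn_adj_inl_inrr (v i : V) (u : W) :
    ¬ (svnCorona G (⊥ : SimpleGraph W)).Adj (Sum.inl v) (Sum.inr (Sum.inr (i, u))) := by
  rw [svn_adj]; rintro (⟨_,_,_,_,h⟩|⟨_,_,_,h,_⟩|⟨_,_,_,_,h,_⟩|⟨_,_,_,_,_,h⟩) <;> simp_all

lemma svn_adj_inrl_inrl (e f : G.edgeSet) :
    ¬ (svnCorona G (⊥ : SimpleGraph W)).Adj (Sum.inr (Sum.inl e)) (Sum.inr (Sum.inl f)) := by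
  rw [svn_adj]; rintro (⟨_,_,_,h,_⟩|⟨_,_,_,h,_⟩|⟨_,_,_,_,_,h⟩|⟨_,_,_,_,h,_⟩) <;> simp_all

lemma svn_adj_inrl_inrr (e : G.edgeSet) (i : V) (u : W) :
    (svnCorona G (⊥ : SimpleGraph W)).Adj (Sum.inr (Sum.inl e)) (Sum.inr (Sum.inr (i, u))) ↔
      i ∈ (e : Sym2 V) := by
  rw [svn_adj]
  constructor
  · rintro (⟨_,_,_,h,_⟩|⟨_,_,_,_,h⟩|⟨f,j,w,hm,h1,h2⟩|⟨_,_,_,_,_,h⟩) <;> simp_all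
  · intro hm; exact Or.inr (Or.inr (Or.inl ⟨e, i, u, hm, rfl, rfl⟩))

lemma svn_adj_inrr_inrr (i : V) (u : W) (j : V) (w : W) :
    ¬ (svnCorona G (⊥ : SimpleGraph W)).Adj (Sum.inr (Sum.inr (i, u))) (Sum.inr (Sum.inr (j, w))) := by
  rw [svn_adj]; rintro (⟨_,_,_,h,_⟩|⟨_,_,_,h,_⟩|⟨_,_,_,_,h,_⟩|⟨_,_,_,_,h,_⟩) <;> simp_all

end adj

section counting
variable {V : Type*} [Fintype V] (G : SimpleGraph V)

lemma sum_edge_ind (v : V) :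
    ∑ e : G.edgeSet, (if v ∈ (e : Sym2 V) then (1:ℕ) else 0) = G.degree v := by
  rw [Finset.sum_boole, ← SimpleGraph.card_incidenceFinset_eq_degree]
  rw [Nat.cast_id]
  apply Finset.card_bij (fun (e : G.edgeSet) _ => (e : Sym2 V))
  · intro e he
    simp only [Finset.mem_filter, Finset.mem_univ, true_and] at he
    simp [SimpleGraph.mem_incidenceFinset, SimpleGraph.incidenceSet, e.2, he]
  · intro a ha b hb h; exact Subtype.ext h
  · intro e he
    rw [SimpleGraph.mem_incidenceFinset] at he
    exact ⟨⟨e, he.1⟩, by simpa using he.2, rfl⟩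

lemma sum_edge_ind2 (u v : V) (huv : u ≠ v) :
    ∑ e : G.edgeSet, (if u ∈ (e : Sym2 V) then (1:ℕ) else 0) *
      (if v ∈ (e : Sym2 V) then (1:ℕ) else 0) = if G.Adj u v then 1 else 0 := by
  have : ∀ e : G.edgeSet, (if u ∈ (e : Sym2 V) then (1:ℕ) else 0) *
      (if v ∈ (e : Sym2 V) then (1:ℕ) else 0) =
      if u ∈ (e : Sym2 V) ∧ v ∈ (e : Sym2 V) then 1 else 0 := by
    intro e; split_ifs with h1 h2 h3 <;> simp_all
  rw [Finset.sum_congr rfl (fun e _ => this e), Finset.sum_boole, Nat.cast_id]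
  by_cases hadj : G.Adj u v
  · rw [if_pos hadj]
    have : (univ.filter fun e : G.edgeSet => u ∈ (e : Sym2 V) ∧ v ∈ (e : Sym2 V)) =
        {⟨s(u,v), hadj⟩} := by
      ext ⟨e, he⟩
      simp only [Finset.mem_filter, Finset.mem_univ, true_and, Finset.mem_singleton]
      constructor
      · rintro ⟨h1, h2⟩
        induction e with
        | _ a b =>
          ext
          simp only [Sym2.mem_iff] at h1 h2
          rcases h1 with rfl | rfl <;> rcases h2 with rfl | rfl <;>
            first | exact absurd rfl huv | simp [Sym2.eq_swap]
      · intro h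
        have he2 : e = s(u,v) := Subtype.ext_iff.mp h
        subst he2; simp
    rw [this, Finset.card_singleton]
  · rw [if_neg hadj, Finset.card_eq_zero, Finset.filter_eq_empty_iff]
    rintro ⟨e, he⟩ _
    induction e with
    | _ a b =>
      rintro ⟨h1, h2⟩
      simp only [Sym2.mem_iff] at h1 h2
      rcases h1 with rfl | rfl <;> rcases h2 with rfl | rfl
      · exact huv rfl
      · exact hadj he
      · exact hadj (G.adj_symm he)
      · exact huv rfl

lemma sum_vert_ind (e : G.edgeSet) :
    ∑ v : V, (if v ∈ (e : Sym2 V) then (1:ℕ) else 0) = 2 := by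
  rw [Finset.sum_boole, Nat.cast_id]
  obtain ⟨e, he⟩ := e
  induction e with
  | _ a b =>
    have : (univ.filter fun v : V => v ∈ (s(a,b) : Sym2 V)) = {a, b} := by
      ext v; simp [Sym2.mem_iff]
    rw [this, Finset.card_insert_of_notMem (by simp [G.ne_of_adj he]),
      Finset.card_singleton]
end counting
section reg
variable {V W : Type*} [Fintype V] [Fintype W] (G : SimpleGraph V)

lemma svn_degree_inl (v : V) :
    (svnCorona G (⊥ : SimpleGraph W)).degree (Sum.inl v) = G.degree v := by
  rw [← SimpleGraph.card_neighborFinset_eq_degree, SimpleGraph.neighborFinset_eq_filter,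
    Finset.card_filter, Fintype.sum_sum_type, Fintype.sum_sum_type]
  simp only [svn_adj_inl_inl, svn_adj_inl_inrl, if_false]
  have h3 : ∀ p : V × W, (if (svnCorona G (⊥ : SimpleGraph W)).Adj (Sum.inl v)
      (Sum.inr (Sum.inr p)) then (1:ℕ) else 0) = 0 := by
    rintro ⟨i, u⟩; simp [svn_adj_inl_inrr]
  rw [Finset.sum_congr rfl (fun p _ => h3 p)]
  simpa using sum_edge_ind G v

lemma svn_degree_inrl (e : G.edgeSet) :
    (svnCorona G (⊥ : SimpleGraph W)).degree (Sum.inr (Sum.inl e)) =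
      2 + 2 * Fintype.card W := by
  rw [← SimpleGraph.card_neighborFinset_eq_degree, SimpleGraph.neighborFinset_eq_filter,
    Finset.card_filter, Fintype.sum_sum_type, Fintype.sum_sum_type]
  have h1 : ∀ v : V, (if (svnCorona G (⊥ : SimpleGraph W)).Adj (Sum.inr (Sum.inl e))
      (Sum.inl v) then (1:ℕ) else 0) = if v ∈ (e : Sym2 V) then 1 else 0 := by
    intro v
    congr 1
    rw [eq_iff_iff, (svnCorona G (⊥ : SimpleGraph W)).adj_comm, svn_adj_inl_inrl]
  have h2 : ∀ f : G.edgeSet, (if (svnCorona G (⊥ : SimpleGraph W)).Adj (Sum.inr (Sum.inl e))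
      (Sum.inr (Sum.inl f)) then (1:ℕ) else 0) = 0 := by
    intro f; simp [svn_adj_inrl_inrl]
  have h3 : ∀ p : V × W, (if (svnCorona G (⊥ : SimpleGraph W)).Adj (Sum.inr (Sum.inl e))
      (Sum.inr (Sum.inr p)) then (1:ℕ) else 0) = if p.1 ∈ (e : Sym2 V) then 1 else 0 := by
    rintro ⟨i, u⟩; simp [svn_adj_inrl_inrr]
  rw [Finset.sum_congr rfl (fun v _ => h1 v), Finset.sum_congr rfl (fun f _ => h2 f),
    Finset.sum_congr rfl (fun p _ => h3 p), Finset.sum_const_zero, Fintype.sum_prod_type]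
  have h4 : ∀ i : V, ∑ _u : W, (if i ∈ (e : Sym2 V) then (1:ℕ) else 0) =
      Fintype.card W * (if i ∈ (e : Sym2 V) then 1 else 0) := by
    intro i; rw [Finset.sum_const, smul_eq_mul, Finset.card_univ]
  rw [Finset.sum_congr rfl (fun i _ => h4 i), ← Finset.mul_sum, sum_vert_ind G e]
  ring

lemma svn_degree_inrr (i : V) (u : W) :
    (svnCorona G (⊥ : SimpleGraph W)).degree (Sum.inr (Sum.inr (i, u))) = G.degree i := by
  rw [← SimpleGraph.card_neighborFinset_eq_degree, SimpleGraph.neighborFinset_eq_filter,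
    Finset.card_filter, Fintype.sum_sum_type, Fintype.sum_sum_type]
  have h1 : ∀ v : V, (if (svnCorona G (⊥ : SimpleGraph W)).Adj (Sum.inr (Sum.inr (i, u)))
      (Sum.inl v) then (1:ℕ) else 0) = 0 := by
    intro v
    rw [if_neg]
    rw [(svnCorona G (⊥ : SimpleGraph W)).adj_comm]
    exact svn_adj_inl_inrr G v i u
  have h2 : ∀ f : G.edgeSet, (if (svnCorona G (⊥ : SimpleGraph W)).Adj (Sum.inr (Sum.inr (i, u)))
      (Sum.inr (Sum.inl f)) then (1:ℕ) else 0) = if i ∈ (f : Sym2 V) then 1 else 0 := by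
    intro f
    congr 1
    rw [eq_iff_iff, (svnCorona G (⊥ : SimpleGraph W)).adj_comm, svn_adj_inrl_inrr]
  have h3 : ∀ p : V × W, (if (svnCorona G (⊥ : SimpleGraph W)).Adj (Sum.inr (Sum.inr (i, u)))
      (Sum.inr (Sum.inr p)) then (1:ℕ) else 0) = 0 := by
    rintro ⟨j, w⟩; simp [svn_adj_inrr_inrr]
  rw [Finset.sum_congr rfl (fun v _ => h1 v), Finset.sum_congr rfl (fun f _ => h2 f),
    Finset.sum_congr rfl (fun p _ => h3 p), Finset.sum_const_zero, Finset.sum_const_zero,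
    sum_edge_ind G i]
  simp

lemma svn_regular (r : ℕ) (hreg : G.IsRegularOfDegree r)
    (hcard : 2 + 2 * Fintype.card W = r) :
    (svnCorona G (⊥ : SimpleGraph W)).IsRegularOfDegree r := by
  rintro (v | e | ⟨i, u⟩)
  · rw [svn_degree_inl]; exact hreg v
  · rw [svn_degree_inrl]; exact hcard
  · rw [svn_degree_inrr]; exact hreg i

end reg
section blocks
variable {V W : Type*} [Fintype V] [Fintype W] [DecidableEq W] (G : SimpleGraph V)

noncomputable def Bmat : Matrix V G.edgeSet ℝ :=
  Matrix.of fun v e => if v ∈ (e : Sym2 V) then 1 else 0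

noncomputable def Cmat (W : Type*) : Matrix G.edgeSet (V × W) ℝ :=
  Matrix.of fun e p => if p.1 ∈ (e : Sym2 V) then 1 else 0

lemma cast_sum_edge_ind (v : V) :
    ∑ e : G.edgeSet, (if v ∈ (e : Sym2 V) then (1:ℝ) else 0) = (G.degree v : ℝ) := by
  rw [← sum_edge_ind G v]; push_cast; rfl

lemma BBt (r : ℕ) (hreg : G.IsRegularOfDegree r) :
    Bmat G * (Bmat G)ᵀ = (r : ℝ) • 1 + G.adjMatrix ℝ := by
  ext u v
  rw [Matrix.mul_apply]
  simp only [Bmat, transpose_apply, Matrix.of_apply, Matrix.add_apply, Matrix.smul_apply,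
    Matrix.one_apply, SimpleGraph.adjMatrix_apply, smul_eq_mul]
  by_cases huv : u = v
  · subst huv
    simp only [if_pos rfl, mul_one, if_neg (G.irrefl), add_zero]
    have : ∀ e : G.edgeSet, (if u ∈ (e : Sym2 V) then (1:ℝ) else 0) *
        (if u ∈ (e : Sym2 V) then (1:ℝ) else 0) = if u ∈ (e : Sym2 V) then 1 else 0 := by
      intro e; split_ifs <;> ring
    rw [Finset.sum_congr rfl fun e _ => this e, cast_sum_edge_ind G u, hreg u]
    simp
  · rw [if_neg huv, mul_zero, zero_add]
    have := sum_edge_ind2 G u v huv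
    have h2 : ∑ e : G.edgeSet, (if u ∈ (e : Sym2 V) then (1:ℝ) else 0) *
        (if v ∈ (e : Sym2 V) then (1:ℝ) else 0) =
        ((∑ e : G.edgeSet, (if u ∈ (e : Sym2 V) then (1:ℕ) else 0) *
          (if v ∈ (e : Sym2 V) then (1:ℕ) else 0) : ℕ) : ℝ) := by
      push_cast; rfl
    rw [h2, this]
    split_ifs <;> simp

lemma CCt : Cmat G W * (Cmat G W)ᵀ = (Fintype.card W : ℝ) • ((Bmat G)ᵀ * Bmat G) := by
  ext e f
  rw [Matrix.mul_apply, Matrix.smul_apply, Matrix.mul_apply]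
  simp only [Cmat, Bmat, transpose_apply, Matrix.of_apply]
  rw [Fintype.sum_prod_type]
  have h : ∀ i : V, ∑ _u : W, ((if i ∈ (e : Sym2 V) then (1:ℝ) else 0) *
      (if i ∈ (f : Sym2 V) then (1:ℝ) else 0)) = (Fintype.card W : ℝ) *
      ((if i ∈ (e : Sym2 V) then (1:ℝ) else 0) * (if i ∈ (f : Sym2 V) then (1:ℝ) else 0)) := by
    intro i; rw [Finset.sum_const, Finset.card_univ, nsmul_eq_mul]
  rw [Finset.sum_congr rfl fun i _ => h i, ← Finset.mul_sum]
  simp [smul_eq_mul]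

noncomputable def M3 (W : Type*) [Fintype W] [DecidableEq W] (y : ℝ) :
    Matrix ((V ⊕ G.edgeSet) ⊕ V × W) ((V ⊕ G.edgeSet) ⊕ V × W) ℝ :=
  Matrix.fromBlocks
    (Matrix.fromBlocks (y • 1) (Bmat G) (Bmat G)ᵀ (y • 1))
    (Matrix.fromRows 0 (Cmat G W))
    (Matrix.fromCols 0 (Cmat G W)ᵀ)
    (y • 1)

lemma blockEq (r : ℕ) (hreg : G.IsRegularOfDegree r) (hcard : 2 + 2 * Fintype.card W = r)
    (x : ℝ) :
    x • (1 : Matrix _ _ ℝ) - (svnCorona G (⊥ : SimpleGraph W)).lapMatrix ℝ =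
      (M3 G W (x - r)).submatrix (Equiv.sumAssoc V G.edgeSet (V × W)).symm
        (Equiv.sumAssoc V G.edgeSet (V × W)).symm := by
  have hreg' := svn_regular G r hreg hcard
  ext a b
  have hdeg : ∀ a, ((svnCorona G (⊥ : SimpleGraph W)).degree a : ℝ) = (r : ℝ) := by
    intro a; rw [hreg' a]
  rcases a with v | e | ⟨i, u⟩ <;> rcases b with w | f | ⟨j, t⟩ <;>
    simp only [Matrix.sub_apply, Matrix.smul_apply, Matrix.one_apply, smul_eq_mul,
      SimpleGraph.lapMatrix, SimpleGraph.degMatrix, Matrix.sub_apply, Matrix.diagonal_apply,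
      SimpleGraph.adjMatrix_apply, Matrix.submatrix_apply, Equiv.sumAssoc, Equiv.coe_fn_symm_mk,
      M3, Matrix.fromBlocks_apply₁₁, Matrix.fromBlocks_apply₁₂, Matrix.fromBlocks_apply₂₁,
      Matrix.fromBlocks_apply₂₂, Matrix.fromRows_apply_inl, Matrix.fromRows_apply_inr,
      Matrix.fromCols_apply_inl, Matrix.fromCols_apply_inr, Matrix.transpose_apply,
      Bmat, Cmat, Matrix.of_apply, Matrix.zero_apply]
  all_goals
    simp only [Sum.elim_inl, Sum.elim_inr, Function.comp_apply, Matrix.fromBlocks_apply₁₁,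
      Matrix.fromBlocks_apply₁₂, Matrix.fromBlocks_apply₂₁, Matrix.fromBlocks_apply₂₂,
      Matrix.fromRows_apply_inl, Matrix.fromRows_apply_inr, Matrix.fromCols_apply_inl,
      Matrix.fromCols_apply_inr, Matrix.transpose_apply, Matrix.of_apply, Matrix.zero_apply,
      Matrix.smul_apply, Matrix.one_apply, smul_eq_mul]
  · by_cases h : v = w <;> simp [h, hdeg, svn_adj_inl_inl] <;> try (split_ifs <;> ring)
  · simp [svn_adj_inl_inrl]
  · simp [svn_adj_inl_inrr]
  · have hc : ((svnCorona G (⊥ : SimpleGraph W)).Adj (Sum.inr (Sum.inl e)) (Sum.inl w)) ↔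
        w ∈ (e : Sym2 V) := by
      rw [(svnCorona G (⊥ : SimpleGraph W)).adj_comm]; exact svn_adj_inl_inrl G w e
    simp [hc]
  · by_cases h : e = f <;> simp [h, hdeg, svn_adj_inrl_inrl] <;> try (split_ifs <;> ring)
  · simp [svn_adj_inrl_inrr]
  · have hc : ¬ ((svnCorona G (⊥ : SimpleGraph W)).Adj (Sum.inr (Sum.inr (i, u))) (Sum.inl w)) := by
      rw [(svnCorona G (⊥ : SimpleGraph W)).adj_comm]; exact svn_adj_inl_inrr G w i u
    simp [hc]
  · have hc : ((svnCorona G (⊥ : SimpleGraph W)).Adj (Sum.inr (Sum.inr (i, u))) (Sum.inr (Sum.inl f))) ↔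
        i ∈ (f : Sym2 V) := by
      rw [(svnCorona G (⊥ : SimpleGraph W)).adj_comm]; exact svn_adj_inrl_inrr G f i u
    simp [hc]
  · by_cases h : (i, u) = (j, t) <;>
      simp [h, hdeg, svn_adj_inrr_inrr, Prod.mk.injEq] <;> try (split_ifs <;> ring)

end blocks
section det
variable {V W : Type*} [Fintype V] [Fintype W] [DecidableEq W] (G : SimpleGraph V)

noncomputable def invSmulOne (n' : Type*) [Fintype n'] [DecidableEq n'] {y : ℝ} (hy : y ≠ 0) :
    Invertible (y • (1 : Matrix n' n' ℝ)) :=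
  ⟨y⁻¹ • 1, by
    rw [Matrix.smul_mul, Matrix.mul_smul, smul_smul, Matrix.one_mul, inv_mul_cancel₀ hy, one_smul],
   by
    rw [Matrix.smul_mul, Matrix.mul_smul, smul_smul, Matrix.one_mul, mul_inv_cancel₀ hy, one_smul]⟩

lemma invOf_smul_one (n' : Type*) [Fintype n'] [DecidableEq n'] {y : ℝ} (hy : y ≠ 0)
    [Invertible (y • (1 : Matrix n' n' ℝ))] :
    ⅟ (y • (1 : Matrix n' n' ℝ)) = y⁻¹ • 1 :=
  invOf_eq_right_inv (by
    rw [Matrix.smul_mul, Matrix.mul_smul, smul_smul, Matrix.one_mul, mul_inv_cancel₀ hy, one_smul])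

lemma fromBlocks_sub {l m n o : Type*} (A : Matrix n l ℝ) (B : Matrix n m ℝ) (C : Matrix o l ℝ)
    (D : Matrix o m ℝ) (A' : Matrix n l ℝ) (B' : Matrix n m ℝ) (C' : Matrix o l ℝ)
    (D' : Matrix o m ℝ) :
    Matrix.fromBlocks A B C D - Matrix.fromBlocks A' B' C' D' =
      Matrix.fromBlocks (A - A') (B - B') (C - C') (D - D') := by
  ext (i | i) (j | j) <;> simp

lemma det_M3 (μ : ℕ → ℝ) (r : ℕ) (hreg : G.IsRegularOfDegree r)
    (hcard : 2 + 2 * Fintype.card W = r)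
    (hμ : ∀ x : ℝ, (x • (1 : Matrix V V ℝ) - G.lapMatrix ℝ).det =
      ∏ i ∈ Finset.range (Fintype.card V), (x - μ i))
    (hw : 1 ≤ Fintype.card W) {y : ℝ} (hy : y ≠ 0) :
    (M3 G W y).det =
      y ^ (Fintype.card V * (Fintype.card W - 1) + Fintype.card G.edgeSet) *
        ∏ i ∈ Finset.range (Fintype.card V),
          (y ^ 2 - (r : ℝ) ^ 2 + ((Fintype.card W : ℝ) + 1) * μ i) := by
  classical
  set n := Fintype.card V with hn
  set m := Fintype.card G.edgeSet with hm
  set w := Fintype.card W with hwdef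
  set c : ℝ := (w : ℝ) + 1 with hcdef
  have hc : c ≠ 0 := by positivity
  have hy2 : y ^ 2 ≠ 0 := pow_ne_zero _ hy
  set s : ℝ := c / y ^ 2 with hsdef
  have hs : s ≠ 0 := div_ne_zero hc hy2
  set z : ℝ := 2 * r - y ^ 2 / c with hzdef
  haveI := invSmulOne (V × W) hy
  haveI := invSmulOne V hy
  have dVW : (y • (1 : Matrix (V × W) (V × W) ℝ)).det = y ^ (n * w) := by
    rw [Matrix.det_smul, Matrix.det_one, mul_one, Fintype.card_prod]
  have dV : (y • (1 : Matrix V V ℝ)).det = y ^ n := by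
    rw [Matrix.det_smul, Matrix.det_one, mul_one]
  rw [M3, Matrix.det_fromBlocks₂₂, invOf_smul_one (V × W) hy]
  have hQR : Matrix.fromRows (0 : Matrix V (V × W) ℝ) (Cmat G W) * (y⁻¹ • (1 : Matrix (V × W) (V × W) ℝ)) *
      Matrix.fromCols (0 : Matrix (V × W) V ℝ) (Cmat G W)ᵀ =
      Matrix.fromBlocks 0 0 0 (y⁻¹ • (Cmat G W * (Cmat G W)ᵀ)) := by
    rw [Matrix.mul_smul, Matrix.mul_one, Matrix.smul_mul, Matrix.fromRows_mul_fromCols]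
    simp [Matrix.fromBlocks_smul]
  rw [hQR, fromBlocks_sub]
  simp only [sub_zero]
  rw [Matrix.det_fromBlocks₁₁, invOf_smul_one V hy]
  have hSchur : y • (1 : Matrix G.edgeSet G.edgeSet ℝ) - y⁻¹ • (Cmat G W * (Cmat G W)ᵀ) -
      (Bmat G)ᵀ * (y⁻¹ • (1 : Matrix V V ℝ)) * Bmat G =
      y • ((1 : Matrix G.edgeSet G.edgeSet ℝ) - s • ((Bmat G)ᵀ * Bmat G)) := by
    rw [CCt G, Matrix.mul_smul, Matrix.mul_one, Matrix.smul_mul, smul_sub, smul_smul, smul_smul]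
    have : y * s = y⁻¹ * (w : ℝ) + y⁻¹ := by
      rw [hsdef, hcdef]; field_simp
    rw [this, add_smul, sub_sub]
  rw [hSchur, dVW, dV, Matrix.det_smul]
  have hWA : ((1 : Matrix G.edgeSet G.edgeSet ℝ) - s • ((Bmat G)ᵀ * Bmat G)).det =
      ((1 : Matrix V V ℝ) - s • (Bmat G * (Bmat G)ᵀ)).det := by
    rw [← Matrix.smul_mul, Matrix.det_one_sub_mul_comm, Matrix.mul_smul]
  rw [hWA]
  have hdegM : G.degMatrix ℝ = (r : ℝ) • 1 := by
    ext i j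
    by_cases h : i = j
    · subst h; simp [SimpleGraph.degMatrix, hreg i]
    · simp [SimpleGraph.degMatrix, h]
  have hadj : G.adjMatrix ℝ = (r : ℝ) • 1 - G.lapMatrix ℝ := by
    rw [SimpleGraph.lapMatrix, hdegM, sub_sub_cancel]
  have hL : (1 : Matrix V V ℝ) - s • (Bmat G * (Bmat G)ᵀ) =
      (-s) • (z • 1 - G.lapMatrix ℝ) := by
    rw [BBt G r hreg, hadj]
    have h1 : -s * z = 1 - 2 * r * s := by
      rw [hsdef, hzdef]; field_simp; ring
    have h2 : (r : ℝ) • (1 : Matrix V V ℝ) + ((r : ℝ) • 1 - G.lapMatrix ℝ) =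
        (2 * r : ℝ) • 1 - G.lapMatrix ℝ := by
      rw [two_mul, add_smul]; abel
    rw [h2, smul_sub, smul_sub, smul_smul, smul_smul, h1, sub_smul, neg_smul, one_smul]
    module
  rw [hL, Matrix.det_smul, hμ z]
  have h2c : 2 * c = (r : ℝ) := by
    rw [hcdef, hwdef]; push_cast [← hcard]; ring
  have hfac : ∀ i : ℕ, y ^ 2 * (-s * (z - μ i)) = y ^ 2 - (r : ℝ) ^ 2 + c * μ i := by
    intro i
    rw [hsdef, hzdef, ← h2c]
    field_simp
    ring
  have hprod : ∏ i ∈ Finset.range n, (y ^ 2 - (r : ℝ) ^ 2 + c * μ i) =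
      (y ^ 2) ^ n * ((-s) ^ n * ∏ i ∈ Finset.range n, (z - μ i)) := by
    calc ∏ i ∈ Finset.range n, (y ^ 2 - (r : ℝ) ^ 2 + c * μ i)
        = ∏ i ∈ Finset.range n, (y ^ 2 * (-s * (z - μ i))) :=
          Finset.prod_congr rfl fun i _ => (hfac i).symm
      _ = (∏ _i ∈ Finset.range n, y ^ 2) * ∏ i ∈ Finset.range n, (-s * (z - μ i)) :=
          Finset.prod_mul_distrib
      _ = (y ^ 2) ^ n * ((∏ _i ∈ Finset.range n, (-s)) *
            ∏ i ∈ Finset.range n, (z - μ i)) := by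
          rw [Finset.prod_mul_distrib, Finset.prod_const, Finset.card_range]
      _ = (y ^ 2) ^ n * ((-s) ^ n * ∏ i ∈ Finset.range n, (z - μ i)) := by
          rw [Finset.prod_const, Finset.card_range]
  rw [hprod, ← pow_mul y 2 n]
  have h0 : n * (w - 1) + n = n * w := by
    obtain ⟨k, hk⟩ : ∃ k, w = k + 1 := ⟨w - 1, by omega⟩
    rw [hk]
    simp [Nat.mul_succ]
  have hee : n * (w - 1) + m + 2 * n = n * w + n + m := by omega
  calc y ^ (n * w) * (y ^ n * (y ^ m * ((-s) ^ n * ∏ i ∈ Finset.range n, (z - μ i))))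
      = y ^ (n * w + n + m) * ((-s) ^ n * ∏ i ∈ Finset.range n, (z - μ i)) := by
        rw [pow_add, pow_add]; ring
    _ = y ^ (n * (w - 1) + m + 2 * n) * ((-s) ^ n * ∏ i ∈ Finset.range n, (z - μ i)) := by
        rw [hee]
    _ = y ^ (n * (w - 1) + m) *
          (y ^ (2 * n) * ((-s) ^ n * ∏ i ∈ Finset.range n, (z - μ i))) := by
        rw [pow_add]; ring

end det
section bound

lemma det_smul_one_sub_ne_zero {V : Type*} [Fintype V] [DecidableEq V] {M : Matrix V V ℝ}
    (hM : M.PosSemidef) {t : ℝ} (ht : t < 0) : (t • (1 : Matrix V V ℝ) - M).det ≠ 0 := by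
  have hP : (M + (-t) • (1 : Matrix V V ℝ)).PosDef := by
    exact Matrix.PosDef.posSemidef_add hM (Matrix.PosDef.one.smul (by linarith))
  have hEq : t • (1 : Matrix V V ℝ) - M = -(M + (-t) • 1) := by
    rw [neg_add, neg_smul, neg_neg]; abel
  rw [hEq, Matrix.det_neg]
  exact mul_ne_zero (pow_ne_zero _ (by norm_num)) hP.det_pos.ne'

lemma multiset_prod_eval (x : ℝ) (s : Multiset ℝ) :
    ((s.map (fun t => Polynomial.X - Polynomial.C t)).prod).eval x =
      (s.map (fun t => x - t)).prod := by
  rw [Polynomial.eval_multiset_prod, Multiset.map_map]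
  congr 1
  apply Multiset.map_congr rfl
  intro t _
  simp

lemma finset_val_prod (s : Finset ℕ) (f : ℕ → ℝ) (x : ℝ) :
    ((s.val.map f).map (fun t => x - t)).prod = ∏ i ∈ s, (x - f i) := by
  rw [Multiset.map_map, Finset.prod_eq_multiset_prod]
  rfl

lemma filter_card_eq (s : Finset ℕ) (p : ℕ → Prop) [DecidablePred p] :
    Multiset.card (s.val.filter p) = (s.filter p).card := by
  rw [← Finset.filter_val]; rfl

end bound

theorem stmt11 {V : Type*} [Fintype V] (G : SimpleGraph V) (r : ℕ)
    (hreg : G.IsRegularOfDegree r) (hr : Even r) (hr4 : 4 ≤ r)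
    (hV : 2 ≤ Fintype.card V)
    (μ ν : ℕ → ℝ) (hμmono : Monotone μ) (hνmono : Monotone ν)
    (hμ : ∀ x : ℝ, (x • (1 : Matrix V V ℝ) - G.lapMatrix ℝ).det =
      ∏ i ∈ Finset.range (Fintype.card V), (x - μ i))
    (hν : ∀ x : ℝ, (x • (1 : Matrix _ _ ℝ) -
        (svnCorona G (⊥ : SimpleGraph (Fin (r / 2 - 1)))).lapMatrix ℝ).det =
      ∏ i ∈ Finset.range
        (Fintype.card (V ⊕ (↑G.edgeSet ⊕ V × Fin (r / 2 - 1)))), (x - ν i)) :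
    (svnCorona G (⊥ : SimpleGraph (Fin (r / 2 - 1)))).IsRegularOfDegree r ∧
      ν 1 = r - Real.sqrt ((r : ℝ) ^ 2 - (r : ℝ) / 2 * μ 1) := by
  classical
  obtain ⟨k, hk⟩ := hr
  have hcard : 2 + 2 * Fintype.card (Fin (r / 2 - 1)) = r := by
    rw [Fintype.card_fin]; omega
  refine ⟨svn_regular G r hreg hcard, ?_⟩
  set n := Fintype.card V with hn
  set m := Fintype.card G.edgeSet with hm
  set w := Fintype.card (Fin (r / 2 - 1)) with hwdef
  set N := Fintype.card (V ⊕ (↑G.edgeSet ⊕ V × Fin (r / 2 - 1))) with hN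
  have hw1 : 1 ≤ w := by rw [hwdef, Fintype.card_fin]; omega
  set c : ℝ := (w : ℝ) + 1 with hcdef
  have hc2 : c = (r : ℝ) / 2 := by
    have h : (2 : ℝ) + 2 * (w : ℝ) = (r : ℝ) := by exact_mod_cast hcard
    rw [hcdef]; linarith
  have hcpos : 0 < c := by rw [hc2]; positivity
  set K := n * (w - 1) + m with hK
  -- determinant identity away from x = r
  have hdet : ∀ x : ℝ, x ≠ (r : ℝ) →
      ∏ i ∈ Finset.range N, (x - ν i) =
        (x - r) ^ K * ∏ i ∈ Finset.range n, (x ^ 2 - 2 * r * x + c * μ i) := by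
    intro x hx
    rw [← hν x, blockEq G r hreg hcard x, Matrix.det_submatrix_equiv_self,
      det_M3 G μ r hreg hcard hμ hw1 (sub_ne_zero.mpr hx)]
    congr 1
    exact Finset.prod_congr rfl fun i _ => by ring
  -- extend to all x by continuity
  have hall : ∀ x : ℝ, ∏ i ∈ Finset.range N, (x - ν i) =
      (x - r) ^ K * ∏ i ∈ Finset.range n, (x ^ 2 - 2 * r * x + c * μ i) := by
    have hfc : Continuous fun x : ℝ => ∏ i ∈ Finset.range N, (x - ν i) :=
      continuous_finset_prod _ fun i _ => continuous_id.sub continuous_const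
    have hgc : Continuous fun x : ℝ =>
        (x - r) ^ K * ∏ i ∈ Finset.range n, (x ^ 2 - 2 * r * x + c * μ i) := by
      apply Continuous.mul
      · exact (continuous_id.sub continuous_const).pow K
      · refine continuous_finset_prod _ fun i _ => ?_
        apply Continuous.add
        · exact (continuous_pow 2).sub (continuous_const.mul continuous_id)
        · exact continuous_const
    have h := Continuous.ext_on (dense_compl_singleton (r : ℝ)) hfc hgc
      (fun x hx => hdet x hx)
    exact fun x => congrFun h x
  -- upper bound on eigenvalues
  have hμub : ∀ i < n, μ i ≤ 2 * r := by
    intro i hi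
    by_contra hcon
    push_neg at hcon
    have hMpsd : (Bmat G * (Bmat G)ᵀ).PosSemidef := by
      have h := Matrix.posSemidef_self_mul_conjTranspose (Bmat G)
      rwa [Matrix.conjTranspose_eq_transpose_of_trivial] at h
    have hBB2 : Bmat G * (Bmat G)ᵀ = (2 * r : ℝ) • 1 - G.lapMatrix ℝ := by
      rw [BBt G r hreg, SimpleGraph.lapMatrix]
      have hdegM : G.degMatrix ℝ = (r : ℝ) • 1 := by
        ext i j
        by_cases h : i = j
        · subst h; simp [SimpleGraph.degMatrix, hreg i]
        · simp [SimpleGraph.degMatrix, h]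
      rw [hdegM, two_mul, add_smul]
      abel
    have h0 : ((μ i) • (1 : Matrix V V ℝ) - G.lapMatrix ℝ).det = 0 := by
      rw [hμ]
      exact Finset.prod_eq_zero (Finset.mem_range.mpr hi) (sub_self _)
    have h2 : ((2 * r - μ i) • (1 : Matrix V V ℝ) - Bmat G * (Bmat G)ᵀ).det = 0 := by
      have heq : (2 * r - μ i) • (1 : Matrix V V ℝ) - Bmat G * (Bmat G)ᵀ =
          -((μ i) • (1 : Matrix V V ℝ) - G.lapMatrix ℝ) := by
        rw [hBB2, sub_smul]; abel
      rw [heq, Matrix.det_neg, h0, mul_zero]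
    exact det_smul_one_sub_ne_zero hMpsd (by linarith) h2
  -- the two root families
  set a : ℕ → ℝ := fun i => r - Real.sqrt ((r : ℝ) ^ 2 - c * μ i) with ha
  set b : ℕ → ℝ := fun i => r + Real.sqrt ((r : ℝ) ^ 2 - c * μ i) with hb
  have hfact : ∀ i < n, ∀ x : ℝ, x ^ 2 - 2 * r * x + c * μ i = (x - a i) * (x - b i) := by
    intro i hi x
    have hnn : 0 ≤ (r : ℝ) ^ 2 - c * μ i := by
      have h1 := hμub i hi
      have h2 : (0:ℝ) ≤ (r:ℝ) := by positivity
      rw [hc2]; nlinarith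
    have hsq := Real.sq_sqrt hnn
    simp only [ha, hb]
    nlinarith [hsq]
  -- multiset of roots
  set T : Multiset ℝ := Multiset.replicate K (r : ℝ) +
    ((Finset.range n).val.map a + (Finset.range n).val.map b) with hT
  have hMS : (Finset.range N).val.map ν = T := by
    have hPQ : (((Finset.range N).val.map ν).map
        (fun t => Polynomial.X - Polynomial.C t)).prod =
        (T.map (fun t => Polynomial.X - Polynomial.C t)).prod := by
      apply Polynomial.funext
      intro x
      rw [multiset_prod_eval, multiset_prod_eval, finset_val_prod, hall x, hT]
      rw [Multiset.map_add, Multiset.map_add, Multiset.prod_add, Multiset.prod_add,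
        Multiset.map_replicate, Multiset.prod_replicate, finset_val_prod, finset_val_prod]
      rw [← Finset.prod_mul_distrib]
      rw [Finset.prod_congr rfl fun i hi => hfact i (Finset.mem_range.mp hi) x]
    have h := congrArg Polynomial.roots hPQ
    rwa [Polynomial.roots_multiset_prod_X_sub_C, Polynomial.roots_multiset_prod_X_sub_C] at h
  -- basic facts
  have hN2 : 2 ≤ N := by
    have h : n ≤ N := by
      rw [hN, Fintype.card_sum]
      omega
    omega
  have hamono : ∀ i j : ℕ, i ≤ j → a i ≤ a j := by
    intro i j hij
    simp only [ha]
    have h : Real.sqrt ((r : ℝ) ^ 2 - c * μ j) ≤ Real.sqrt ((r : ℝ) ^ 2 - c * μ i) := by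
      apply Real.sqrt_le_sqrt
      have := hμmono hij
      nlinarith
    linarith
  have ha1r : a 1 ≤ (r : ℝ) := by
    simp only [ha]
    have := Real.sqrt_nonneg ((r : ℝ) ^ 2 - c * μ 1)
    linarith
  have hbr : ∀ i : ℕ, (r : ℝ) ≤ b i := by
    intro i
    simp only [hb]
    have := Real.sqrt_nonneg ((r : ℝ) ^ 2 - c * μ i)
    linarith
  -- ν 1 ≤ a 1
  have hle : ν 1 ≤ a 1 := by
    by_contra hcon
    push_neg at hcon
    have hcount1 : Multiset.countP (fun t => t ≤ a 1) ((Finset.range N).val.map ν) ≤ 1 := by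
      rw [Multiset.countP_map, filter_card_eq]
      have hsub : (Finset.range N).filter (fun i => ν i ≤ a 1) ⊆ {0} := by
        intro i hi
        rw [Finset.mem_filter] at hi
        rcases Nat.eq_zero_or_pos i with h0 | h1
        · simp [h0]
        · exfalso
          have : ν 1 ≤ ν i := hνmono h1
          linarith [hi.2]
      calc (Finset.filter (fun i => ν i ≤ a 1) (Finset.range N)).card
          ≤ ({0} : Finset ℕ).card := Finset.card_le_card hsub
        _ = 1 := Finset.card_singleton 0
    have hcount2 : 2 ≤ Multiset.countP (fun t => t ≤ a 1) T := by
      rw [hT, Multiset.countP_add, Multiset.countP_add]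
      have h2 : 2 ≤ Multiset.countP (fun t => t ≤ a 1) ((Finset.range n).val.map a) := by
        rw [Multiset.countP_map, filter_card_eq]
        have hsub : ({0, 1} : Finset ℕ) ⊆
            (Finset.range n).filter (fun i => a i ≤ a 1) := by
          intro i hi
          rw [Finset.mem_insert, Finset.mem_singleton] at hi
          rw [Finset.mem_filter, Finset.mem_range]
          rcases hi with rfl | rfl
          · exact ⟨by omega, hamono 0 1 (by omega)⟩
          · exact ⟨by omega, le_refl _⟩
        calc (2 : ℕ) = ({0, 1} : Finset ℕ).card := by simp
          _ ≤ _ := Finset.card_le_card hsub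
      omega
    rw [hMS] at hcount1
    omega
  -- a 1 ≤ ν 1
  have hge : a 1 ≤ ν 1 := by
    by_contra hcon
    push_neg at hcon
    have hcount1 : 2 ≤ Multiset.countP (fun t => t < a 1) ((Finset.range N).val.map ν) := by
      rw [Multiset.countP_map, filter_card_eq]
      have hsub : ({0, 1} : Finset ℕ) ⊆
          (Finset.range N).filter (fun i => ν i < a 1) := by
        intro i hi
        rw [Finset.mem_insert, Finset.mem_singleton] at hi
        rw [Finset.mem_filter, Finset.mem_range]
        rcases hi with rfl | rfl
        · exact ⟨by omega, lt_of_le_of_lt (hνmono (by omega)) hcon⟩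
        · exact ⟨by omega, hcon⟩
      calc (2 : ℕ) = ({0, 1} : Finset ℕ).card := by simp
        _ ≤ _ := Finset.card_le_card hsub
    have hcount2 : Multiset.countP (fun t => t < a 1) T ≤ 1 := by
      rw [hT, Multiset.countP_add, Multiset.countP_add]
      have h1 : Multiset.countP (fun t => t < a 1) (Multiset.replicate K (r : ℝ)) = 0 := by
        rw [Multiset.countP_eq_zero]
        intro t ht
        rw [Multiset.eq_of_mem_replicate ht]
        linarith
      have h3 : Multiset.countP (fun t => t < a 1) ((Finset.range n).val.map b) = 0 := by
        rw [Multiset.countP_eq_zero]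
        intro t ht
        rw [Multiset.mem_map] at ht
        obtain ⟨i, _, rfl⟩ := ht
        have := hbr i
        linarith
      have h2 : Multiset.countP (fun t => t < a 1) ((Finset.range n).val.map a) ≤ 1 := by
        rw [Multiset.countP_map, filter_card_eq]
        have hsub : (Finset.range n).filter (fun i => a i < a 1) ⊆ {0} := by
          intro i hi
          rw [Finset.mem_filter] at hi
          rcases Nat.eq_zero_or_pos i with h0 | hp
          · simp [h0]
          · exfalso
            have := hamono 1 i hp
            linarith [hi.2]
        calc (Finset.filter (fun i => a i < a 1) (Finset.range n)).card
            ≤ ({0} : Finset ℕ).card := Finset.card_le_card hsub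
          _ = 1 := Finset.card_singleton 0
      omega
    rw [hMS] at hcount1
    omega
  have hfin : ν 1 = a 1 := le_antisymm hle hge
  rw [hfin]
  simp only [ha]
  rw [hc2]
end

section
/- Let G₁ be an r₁-regular graph with n₁ vertices and m₁ edges, and G₂ an arbitrary graph on n₂ vertices. Then the adjacency characteristic polynomial of the subdivision-edge neighbourhood corona G₁ ⊟ G₂ equals x^{m₁−n₁} · φ(A(G₂); x)^{m₁} · ∏_{i=1}^{n₁}( x² − (1 + x·Γ_{A(G₂)}(x))(λ_i(G₁)+r₁) ). -/
open scoped Classical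

/-- The subdivision-edge neighbourhood corona `G₁ ⊟ G₂`. -/
def sencCorona {V₁ V₂ : Type*} (G₁ : SimpleGraph V₁) (G₂ : SimpleGraph V₂) :
    SimpleGraph (V₁ ⊕ (↑G₁.edgeSet ⊕ ↑G₁.edgeSet × V₂)) :=
  SimpleGraph.fromRel (fun a b =>
    (∃ v e, a = Sum.inl v ∧ b = Sum.inr (Sum.inl e) ∧ v ∈ (e : Sym2 V₁)) ∨
    (∃ v e u, a = Sum.inl v ∧ b = Sum.inr (Sum.inr (e, u)) ∧ v ∈ (e : Sym2 V₁)) ∨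
    (∃ e u w, a = Sum.inr (Sum.inr (e, u)) ∧ b = Sum.inr (Sum.inr (e, w)) ∧ G₂.Adj u w))

namespace SencProof
open Matrix Finset Sum

lemma coronal_eq {n : Type*} [Fintype n] (M : Matrix n n ℝ) (t : ℝ) :
    coronal M t = ((t • (1 : Matrix n n ℝ) - M).det)⁻¹ *
      ∑ i, ∑ j, (t • (1 : Matrix n n ℝ) - M).adjugate i j := by
  unfold coronal
  simp [Matrix.inv_def, Ring.inverse_eq_inv, Finset.mul_sum]

section Adj
variable {V₁ V₂ : Type*} (G₁ : SimpleGraph V₁) (G₂ : SimpleGraph V₂)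

lemma adj_inl_inl (v w : V₁) : ¬ (sencCorona G₁ G₂).Adj (inl v) (inl w) := by
  simp [sencCorona, SimpleGraph.fromRel_adj]

lemma adj_inl_inrl (v : V₁) (e : G₁.edgeSet) :
    (sencCorona G₁ G₂).Adj (inl v) (inr (inl e)) ↔ v ∈ (e : Sym2 V₁) := by
  simp [sencCorona, SimpleGraph.fromRel_adj]

lemma adj_inl_inrr (v : V₁) (e : G₁.edgeSet) (u : V₂) :
    (sencCorona G₁ G₂).Adj (inl v) (inr (inr (e, u))) ↔ v ∈ (e : Sym2 V₁) := by
  simp [sencCorona, SimpleGraph.fromRel_adj]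

lemma adj_inrl_inrl (e f : G₁.edgeSet) :
    ¬ (sencCorona G₁ G₂).Adj (inr (inl e)) (inr (inl f)) := by
  simp [sencCorona, SimpleGraph.fromRel_adj]

lemma adj_inrl_inrr (e f : G₁.edgeSet) (u : V₂) :
    ¬ (sencCorona G₁ G₂).Adj (inr (inl e)) (inr (inr (f, u))) := by
  simp [sencCorona, SimpleGraph.fromRel_adj]

lemma adj_inrr_inrr (e f : G₁.edgeSet) (u w : V₂) :
    (sencCorona G₁ G₂).Adj (inr (inr (e, u))) (inr (inr (f, w))) ↔ e = f ∧ G₂.Adj u w := by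
  simp only [sencCorona, SimpleGraph.fromRel_adj]
  constructor
  · rintro ⟨hne, (⟨v, e', h1, -⟩ | ⟨v, e', u', h1, -⟩ | ⟨e', u', w', h1, h2, hA⟩) |
      (⟨v, e', h1, h2, -⟩ | ⟨v, e', u', h1, -⟩ | ⟨e', u', w', h1, h2, hA⟩)⟩
    · simp at h1
    · simp at h1
    · simp only [inr.injEq, Prod.mk.injEq] at h1 h2
      exact ⟨h1.1.trans h2.1.symm, h1.2 ▸ h2.2 ▸ hA⟩
    · simp at h1
    · simp at h1
    · simp only [inr.injEq, Prod.mk.injEq] at h1 h2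
      exact ⟨h2.1.trans h1.1.symm, (h2.2 ▸ h1.2 ▸ hA).symm⟩
  · rintro ⟨rfl, hadj⟩
    exact ⟨by simp [Prod.ext_iff, hadj.ne], Or.inl (Or.inr (Or.inr ⟨e, u, w, rfl, rfl, hadj⟩))⟩

lemma adj_inrl_inl (e : G₁.edgeSet) (v : V₁) :
    (sencCorona G₁ G₂).Adj (inr (inl e)) (inl v) ↔ v ∈ (e : Sym2 V₁) := by
  rw [SimpleGraph.adj_comm]; exact adj_inl_inrl G₁ G₂ v e

lemma adj_inrr_inl (e : G₁.edgeSet) (u : V₂) (v : V₁) :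
    (sencCorona G₁ G₂).Adj (inr (inr (e, u))) (inl v) ↔ v ∈ (e : Sym2 V₁) := by
  rw [SimpleGraph.adj_comm]; exact adj_inl_inrr G₁ G₂ v e u

lemma adj_inrr_inrl (e f : G₁.edgeSet) (u : V₂) :
    ¬ (sencCorona G₁ G₂).Adj (inr (inr (e, u))) (inr (inl f)) := by
  rw [SimpleGraph.adj_comm]; exact adj_inrl_inrr G₁ G₂ f e u

end Adj

variable {V₁ V₂ : Type*} (G₁ : SimpleGraph V₁) (G₂ : SimpleGraph V₂) [Fintype V₁] [Fintype V₂]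

noncomputable def inc (G₁ : SimpleGraph V₁) : Matrix V₁ G₁.edgeSet ℝ :=
  Matrix.of fun v e => if v ∈ (e : Sym2 V₁) then 1 else 0

lemma inc_mul_transpose (G₁ : SimpleGraph V₁) {r : ℕ} (h : G₁.IsRegularOfDegree r) :
    inc G₁ * (inc G₁)ᵀ = G₁.adjMatrix ℝ + (r : ℝ) • 1 := by
  ext v w
  simp only [Matrix.mul_apply, inc, Matrix.transpose_apply, Matrix.of_apply,
    ite_mul, one_mul, zero_mul, mul_ite, mul_one, mul_zero, ← ite_and,
    Matrix.add_apply, SimpleGraph.adjMatrix_apply, Matrix.smul_apply, Matrix.one_apply,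
    smul_eq_mul]
  by_cases hvw : v = w
  · subst hvw
    simp only [and_self, SimpleGraph.irrefl, if_neg (G₁.irrefl), if_false, zero_add,
      if_true, eq_self_iff_true, mul_one]
    rw [Finset.sum_boole, ← Fintype.card_subtype]
    have : Fintype.card {e : G₁.edgeSet // v ∈ (e : Sym2 V₁)} = G₁.degree v := by
      rw [← SimpleGraph.card_incidenceFinset_eq_degree, SimpleGraph.incidenceFinset,
        Set.toFinset_card]
      refine Fintype.card_congr ((Equiv.subtypeSubtypeEquivSubtypeInter
        (fun e => e ∈ G₁.edgeSet) (fun e => v ∈ e)).trans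
        (Equiv.subtypeEquivRight fun e => ?_))
      simp [SimpleGraph.incidenceSet]
    rw [this, h v]
  · simp only [if_neg hvw, mul_zero, add_zero]
    have hcongr : ∀ e : G₁.edgeSet, (if w ∈ (e : Sym2 V₁) ∧ v ∈ (e : Sym2 V₁) then (1:ℝ) else 0)
        = if (e : Sym2 V₁) = s(v, w) then (1:ℝ) else 0 := by
      intro e
      by_cases hE : (e : Sym2 V₁) = s(v, w)
      · rw [if_pos hE, if_pos]
        rw [hE]
        exact ⟨Sym2.mem_mk_right v w, Sym2.mem_mk_left v w⟩
      · rw [if_neg hE, if_neg]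
        rintro ⟨hw, hv⟩
        exact hE ((Sym2.mem_and_mem_iff hvw).mp ⟨hv, hw⟩)
    rw [Finset.sum_congr rfl fun e _ => hcongr e]
    by_cases hadj : G₁.Adj v w
    · rw [if_pos hadj]
      have : ∀ e : G₁.edgeSet, ((e : Sym2 V₁) = s(v, w)) = (e = (⟨s(v,w), hadj⟩ : G₁.edgeSet)) := by
        intro e; rw [eq_iff_iff, Subtype.ext_iff]
      simp only [this]
      simp
    · rw [if_neg hadj]
      apply Finset.sum_eq_zero
      intro e _
      rw [if_neg]
      intro hE
      exact hadj (G₁.mem_edgeSet.mp (hE ▸ e.2))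

noncomputable def bigB (G₁ : SimpleGraph V₁) (V₂ : Type*) :
    Matrix (V₁ ⊕ G₁.edgeSet) (G₁.edgeSet × V₂) ℝ :=
  Matrix.of fun i q => Sum.elim (fun v => -(inc G₁ v q.1)) (fun _ => 0) i

noncomputable def bigC (G₂ : SimpleGraph V₂) (G₁ : SimpleGraph V₁) :
    Matrix (G₁.edgeSet × V₂) (V₁ ⊕ G₁.edgeSet) ℝ :=
  Matrix.of fun q i => Sum.elim (fun v => -(inc G₁ v q.1)) (fun _ => 0) i

noncomputable def bigD (G₁ : SimpleGraph V₁) (G₂ : SimpleGraph V₂) (x : ℝ) :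
    Matrix (G₁.edgeSet × V₂) (G₁.edgeSet × V₂) ℝ :=
  Matrix.of fun p q => if p.1 = q.1 then (x • 1 - G₂.adjMatrix ℝ) p.2 q.2 else 0

noncomputable def bigD' (G₁ : SimpleGraph V₁) (G₂ : SimpleGraph V₂) (x : ℝ) :
    Matrix (G₁.edgeSet × V₂) (G₁.edgeSet × V₂) ℝ :=
  Matrix.of fun p q => if p.1 = q.1 then (x • 1 - G₂.adjMatrix ℝ)⁻¹ p.2 q.2 else 0

noncomputable def bigA (G₁ : SimpleGraph V₁) (x : ℝ) :
    Matrix (V₁ ⊕ G₁.edgeSet) (V₁ ⊕ G₁.edgeSet) ℝ :=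
  Matrix.fromBlocks (x • 1) (-(inc G₁)) (-(inc G₁)ᵀ) (x • 1)

lemma det_eq_blocks (x : ℝ) :
    (x • (1 : Matrix _ _ ℝ) - (sencCorona G₁ G₂).adjMatrix ℝ).det =
    (Matrix.fromBlocks (bigA G₁ x) (bigB G₁ V₂) (bigC G₂ G₁) (bigD G₁ G₂ x)).det := by
  rw [← Matrix.det_submatrix_equiv_self
    (Equiv.sumAssoc V₁ ↑G₁.edgeSet (↑G₁.edgeSet × V₂)).symm]
  congr 1
  ext i j
  rcases i with v | e | ⟨e, u⟩ <;> rcases j with w | f | ⟨f, t⟩ <;>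
    simp only [Matrix.submatrix_apply, Equiv.sumAssoc_symm_apply_inl,
      Equiv.sumAssoc_symm_apply_inr_inl, Equiv.sumAssoc_symm_apply_inr_inr,
      Matrix.sub_apply, Matrix.smul_apply, Matrix.one_apply, SimpleGraph.adjMatrix_apply,
      smul_eq_mul, Matrix.fromBlocks_apply₁₁, Matrix.fromBlocks_apply₁₂,
      Matrix.fromBlocks_apply₂₁, Matrix.fromBlocks_apply₂₂,
      bigA, bigB, bigC, bigD, inc, Matrix.of_apply, Sum.elim_inl, Sum.elim_inr,
      Matrix.neg_apply, Matrix.transpose_apply]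
  · simp [adj_inl_inl G₁ G₂]
  · simp [adj_inl_inrl G₁ G₂]
  · simp [adj_inl_inrr G₁ G₂]
  · simp [adj_inrl_inl G₁ G₂]
  · simp [adj_inrl_inrl G₁ G₂]
  · simp [adj_inrl_inrr G₁ G₂]
  · simp [adj_inrr_inl G₁ G₂]
  · simp [adj_inrr_inrl G₁ G₂]
  · by_cases hef : e = f <;> simp [adj_inrr_inrr G₁ G₂, hef, Prod.ext_iff]

lemma det_bigD (x : ℝ) :
    (bigD G₁ G₂ x).det =
      (x • (1 : Matrix V₂ V₂ ℝ) - G₂.adjMatrix ℝ).det ^ Fintype.card G₁.edgeSet := by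
  have h : bigD G₁ G₂ x =
      (Matrix.blockDiagonal fun _ : G₁.edgeSet => x • (1 : Matrix V₂ V₂ ℝ) - G₂.adjMatrix ℝ
        ).submatrix (Equiv.prodComm _ _) (Equiv.prodComm _ _) := by
    ext ⟨e, u⟩ ⟨f, t⟩
    simp [bigD, Matrix.blockDiagonal_apply, eq_comm]
  rw [h, Matrix.det_submatrix_equiv_self, Matrix.det_blockDiagonal, Finset.prod_const,
    Finset.card_univ]

lemma bigD_mul_bigD' (x : ℝ) (hx : (x • (1 : Matrix V₂ V₂ ℝ) - G₂.adjMatrix ℝ).det ≠ 0) :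
    bigD G₁ G₂ x * bigD' G₁ G₂ x = 1 := by
  have hS : (x • (1 : Matrix V₂ V₂ ℝ) - G₂.adjMatrix ℝ) *
      (x • (1 : Matrix V₂ V₂ ℝ) - G₂.adjMatrix ℝ)⁻¹ = 1 :=
    Matrix.mul_nonsing_inv _ (isUnit_iff_ne_zero.mpr hx)
  ext ⟨e, u⟩ ⟨f, t⟩
  rw [Matrix.mul_apply]
  rw [Fintype.sum_prod_type]
  have hcalc : ∀ g : G₁.edgeSet,
      (∑ s : V₂, bigD G₁ G₂ x (e, u) (g, s) * bigD' G₁ G₂ x (g, s) (f, t)) =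
      if e = g then (if g = f then ((x • (1 : Matrix V₂ V₂ ℝ) - G₂.adjMatrix ℝ) *
        (x • (1 : Matrix V₂ V₂ ℝ) - G₂.adjMatrix ℝ)⁻¹) u t else 0) else 0 := by
    intro g
    by_cases heg : e = g <;> by_cases hgf : g = f <;>
      simp [bigD, bigD', heg, hgf, Matrix.mul_apply]
  rw [Finset.sum_congr rfl fun g _ => hcalc g, Finset.sum_ite_eq, if_pos (Finset.mem_univ e), hS]
  by_cases hef : e = f <;> by_cases hut : u = t <;>
    simp [hef, hut, Matrix.one_apply, Prod.ext_iff]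

lemma bigB_mul_bigD' (x : ℝ) : bigB G₁ V₂ * bigD' G₁ G₂ x = Matrix.of fun i q =>
    Sum.elim (fun v => -(inc G₁ v q.1) *
      ∑ u, (x • (1 : Matrix V₂ V₂ ℝ) - G₂.adjMatrix ℝ)⁻¹ u q.2) (fun _ => 0) i := by
  ext i ⟨f, t⟩
  rcases i with v | e
  · rw [Matrix.mul_apply, Fintype.sum_prod_type]
    simp only [bigB, bigD', Matrix.of_apply, Sum.elim_inl]
    have hcalc : ∀ g : G₁.edgeSet, (∑ s : V₂, -(inc G₁ v g) *
        (if g = f then (x • (1 : Matrix V₂ V₂ ℝ) - G₂.adjMatrix ℝ)⁻¹ s t else 0)) =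
        if g = f then -(inc G₁ v g) *
          ∑ s, (x • (1 : Matrix V₂ V₂ ℝ) - G₂.adjMatrix ℝ)⁻¹ s t else 0 := by
      intro g
      by_cases h : g = f <;> simp [h, Finset.mul_sum]
    rw [Finset.sum_congr rfl fun g _ => hcalc g, Finset.sum_ite_eq' Finset.univ f,
      if_pos (Finset.mem_univ f)]
  · simp [bigB, Matrix.mul_apply]

lemma bigBDC (x : ℝ) : bigB G₁ V₂ * bigD' G₁ G₂ x * bigC G₂ G₁ = Matrix.of fun i j =>
    Sum.elim (fun v => Sum.elim (fun w =>
      coronal (G₂.adjMatrix ℝ) x * (inc G₁ * (inc G₁)ᵀ) v w) (fun _ => 0) j) (fun _ => 0) i := by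
  rw [bigB_mul_bigD']
  ext i j
  rcases i with v | e <;> rcases j with w | f
  · rw [Matrix.mul_apply, Fintype.sum_prod_type]
    simp only [bigC, Matrix.of_apply, Sum.elim_inl]
    have hstep : ∀ f : G₁.edgeSet, (∑ t : V₂, (-(inc G₁ v f) *
        ∑ u, (x • (1 : Matrix V₂ V₂ ℝ) - G₂.adjMatrix ℝ)⁻¹ u t) * -(inc G₁ w f)) =
        inc G₁ v f * inc G₁ w f *
          ∑ t, ∑ u, (x • (1 : Matrix V₂ V₂ ℝ) - G₂.adjMatrix ℝ)⁻¹ u t := by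
      intro f
      rw [Finset.mul_sum]
      refine Finset.sum_congr rfl fun t _ => ?_
      ring
    rw [Finset.sum_congr rfl fun f _ => hstep f, ← Finset.sum_mul]
    have h1 : (∑ f : G₁.edgeSet, inc G₁ v f * inc G₁ w f) = (inc G₁ * (inc G₁)ᵀ) v w := by
      simp [Matrix.mul_apply]
    have h2 : (∑ t : V₂, ∑ u : V₂, (x • (1 : Matrix V₂ V₂ ℝ) - G₂.adjMatrix ℝ)⁻¹ u t) =
        coronal (G₂.adjMatrix ℝ) x := by
      rw [coronal, Finset.sum_comm]
    rw [h1, h2, mul_comm]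
  · simp [bigC, Matrix.mul_apply]
  · simp [Matrix.mul_apply, bigC]
  · simp [Matrix.mul_apply, bigC]

lemma schur_inner (x : ℝ) : bigA G₁ x - bigB G₁ V₂ * bigD' G₁ G₂ x * bigC G₂ G₁ =
    Matrix.fromBlocks
      (x • 1 - coronal (G₂.adjMatrix ℝ) x • (inc G₁ * (inc G₁)ᵀ))
      (-(inc G₁)) (-(inc G₁)ᵀ) (x • 1) := by
  rw [bigBDC]
  ext i j
  rcases i with v | e <;> rcases j with w | f <;>
    simp [bigA, Matrix.sub_apply, Matrix.smul_apply, smul_eq_mul]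

lemma schur_outer (P : Matrix V₁ V₁ ℝ) (x : ℝ) (hx0 : x ≠ 0) :
    (Matrix.fromBlocks P (-(inc G₁)) (-(inc G₁)ᵀ)
      (x • (1 : Matrix G₁.edgeSet G₁.edgeSet ℝ))).det =
    x ^ Fintype.card G₁.edgeSet * (P - x⁻¹ • (inc G₁ * (inc G₁)ᵀ)).det := by
  have h1 : (x • (1 : Matrix G₁.edgeSet G₁.edgeSet ℝ)) * (x⁻¹ • 1) = 1 := by
    rw [Matrix.smul_mul, Matrix.mul_smul, smul_smul, mul_inv_cancel₀ hx0, one_smul,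
      Matrix.mul_one]
  haveI : Invertible (x • (1 : Matrix G₁.edgeSet G₁.edgeSet ℝ)) :=
    invertibleOfRightInverse _ _ h1
  rw [Matrix.det_fromBlocks₂₂, invOf_eq_right_inv h1]
  have h2 : -(inc G₁) * (x⁻¹ • (1 : Matrix G₁.edgeSet G₁.edgeSet ℝ)) * (-(inc G₁)ᵀ) =
      x⁻¹ • (inc G₁ * (inc G₁)ᵀ) := by
    rw [Matrix.mul_smul, Matrix.mul_one, Matrix.smul_mul, Matrix.neg_mul, Matrix.mul_neg,
      neg_neg]
  rw [h2, Matrix.det_smul, Matrix.det_one, mul_one]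

lemma det_linear (r₁ : ℕ) (α : ℕ → ℝ)
    (hα : ∀ x : ℝ, (x • (1 : Matrix V₁ V₁ ℝ) - G₁.adjMatrix ℝ).det =
      ∏ i ∈ Finset.range (Fintype.card V₁), (x - α i))
    (c y : ℝ) :
    (y • (1 : Matrix V₁ V₁ ℝ) - c • (G₁.adjMatrix ℝ + (r₁ : ℝ) • 1)).det =
      ∏ i ∈ Finset.range (Fintype.card V₁), (y - c * (α i + r₁)) := by
  by_cases hc : c = 0
  · subst hc
    simp only [zero_smul, sub_zero, zero_mul, sub_zero]
    rw [Matrix.det_smul, Matrix.det_one, mul_one, Finset.prod_const, Finset.card_range]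
  · set t := (y - c * r₁) / c with ht
    have hct : c * t = y - c * r₁ := by
      rw [ht]
      field_simp
    have hexp : y • (1 : Matrix V₁ V₁ ℝ) - c • (G₁.adjMatrix ℝ + (r₁ : ℝ) • 1) =
        c • (t • 1 - G₁.adjMatrix ℝ) := by
      rw [smul_sub, smul_smul, hct]
      module
    rw [hexp, Matrix.det_smul, hα t]
    have hcc : c ^ Fintype.card V₁ = ∏ _i ∈ Finset.range (Fintype.card V₁), c := by
      rw [Finset.prod_const, Finset.card_range]
    rw [hcc, ← Finset.prod_mul_distrib]
    refine Finset.prod_congr rfl fun i _ => ?_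
    rw [mul_sub, hct]
    ring

lemma key_ne (r₁ : ℕ)
    (hreg : G₁.IsRegularOfDegree r₁)
    (hmn : Fintype.card V₁ ≤ Fintype.card ↑G₁.edgeSet)
    (α : ℕ → ℝ)
    (hα : ∀ x : ℝ, (x • (1 : Matrix V₁ V₁ ℝ) - G₁.adjMatrix ℝ).det =
      ∏ i ∈ Finset.range (Fintype.card V₁), (x - α i))
    (x : ℝ) (hx : (x • (1 : Matrix V₂ V₂ ℝ) - G₂.adjMatrix ℝ).det ≠ 0) (hx0 : x ≠ 0) :
    (x • (1 : Matrix _ _ ℝ) - (sencCorona G₁ G₂).adjMatrix ℝ).det =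
      x ^ (Fintype.card ↑G₁.edgeSet - Fintype.card V₁) *
      ((x • (1 : Matrix V₂ V₂ ℝ) - G₂.adjMatrix ℝ).det) ^ (Fintype.card ↑G₁.edgeSet) *
      ∏ i ∈ Finset.range (Fintype.card V₁),
        (x ^ 2 - (1 + x * coronal (G₂.adjMatrix ℝ) x) * (α i + r₁)) := by
  haveI : Invertible (bigD G₁ G₂ x) :=
    invertibleOfRightInverse _ _ (bigD_mul_bigD' G₁ G₂ x hx)
  rw [det_eq_blocks, Matrix.det_fromBlocks₂₂, invOf_eq_right_inv (bigD_mul_bigD' G₁ G₂ x hx),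
    schur_inner, det_bigD, schur_outer G₁ _ x hx0]
  have hcomb : (x • (1 : Matrix V₁ V₁ ℝ) - coronal (G₂.adjMatrix ℝ) x • (inc G₁ * (inc G₁)ᵀ))
      - x⁻¹ • (inc G₁ * (inc G₁)ᵀ) =
      x • 1 - (coronal (G₂.adjMatrix ℝ) x + x⁻¹) • (inc G₁ * (inc G₁)ᵀ) := by
    rw [add_smul]
    module
  rw [hcomb, inc_mul_transpose G₁ hreg, det_linear G₁ r₁ α hα]
  have hpow : x ^ Fintype.card ↑G₁.edgeSet =
      x ^ (Fintype.card ↑G₁.edgeSet - Fintype.card V₁) * x ^ Fintype.card V₁ := by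
    rw [← pow_add, Nat.sub_add_cancel hmn]
  have hprod : x ^ Fintype.card V₁ * ∏ i ∈ Finset.range (Fintype.card V₁),
      (x - (coronal (G₂.adjMatrix ℝ) x + x⁻¹) * (α i + r₁)) =
      ∏ i ∈ Finset.range (Fintype.card V₁),
        (x ^ 2 - (1 + x * coronal (G₂.adjMatrix ℝ) x) * (α i + r₁)) := by
    have hcc : x ^ Fintype.card V₁ = ∏ _i ∈ Finset.range (Fintype.card V₁), x := by
      rw [Finset.prod_const, Finset.card_range]
    rw [hcc, ← Finset.prod_mul_distrib]
    refine Finset.prod_congr rfl fun i _ => ?_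
    field_simp
    ring
  calc (x • (1 : Matrix V₂ V₂ ℝ) - G₂.adjMatrix ℝ).det ^ Fintype.card ↑G₁.edgeSet *
        (x ^ Fintype.card ↑G₁.edgeSet * ∏ i ∈ Finset.range (Fintype.card V₁),
          (x - (coronal (G₂.adjMatrix ℝ) x + x⁻¹) * (α i + r₁)))
      = (x • (1 : Matrix V₂ V₂ ℝ) - G₂.adjMatrix ℝ).det ^ Fintype.card ↑G₁.edgeSet *
        (x ^ (Fintype.card ↑G₁.edgeSet - Fintype.card V₁) *
          (x ^ Fintype.card V₁ * ∏ i ∈ Finset.range (Fintype.card V₁),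
            (x - (coronal (G₂.adjMatrix ℝ) x + x⁻¹) * (α i + r₁)))) := by
        rw [hpow]; ring
    _ = _ := by rw [hprod]; ring

end SencProof

theorem stmt13 {V₁ V₂ : Type*} [Fintype V₁] [Fintype V₂]
    (G₁ : SimpleGraph V₁) (G₂ : SimpleGraph V₂) (r₁ : ℕ)
    (hreg : G₁.IsRegularOfDegree r₁)
    (hmn : Fintype.card V₁ ≤ Fintype.card ↑G₁.edgeSet)
    (α : ℕ → ℝ)
    (hα : ∀ x : ℝ, (x • (1 : Matrix V₁ V₁ ℝ) - G₁.adjMatrix ℝ).det =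
      ∏ i ∈ Finset.range (Fintype.card V₁), (x - α i))
    (x : ℝ) (hx : (x • (1 : Matrix V₂ V₂ ℝ) - G₂.adjMatrix ℝ).det ≠ 0) :
    (x • (1 : Matrix _ _ ℝ) - (sencCorona G₁ G₂).adjMatrix ℝ).det =
      x ^ (Fintype.card ↑G₁.edgeSet - Fintype.card V₁) *
      ((x • (1 : Matrix V₂ V₂ ℝ) - G₂.adjMatrix ℝ).det) ^ (Fintype.card ↑G₁.edgeSet) *
      ∏ i ∈ Finset.range (Fintype.card V₁),
        (x ^ 2 - (1 + x * coronal (G₂.adjMatrix ℝ) x) * (α i + r₁)) := by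
  by_cases hx0 : x = 0
  · subst hx0
    have hS_cont : Continuous fun t : ℝ => t • (1 : Matrix V₂ V₂ ℝ) - G₂.adjMatrix ℝ :=
      (continuous_id.smul continuous_const).sub continuous_const
    have hdS : Continuous fun t : ℝ => (t • (1 : Matrix V₂ V₂ ℝ) - G₂.adjMatrix ℝ).det :=
      hS_cont.matrix_det
    have haS : Continuous fun t : ℝ =>
        ∑ i, ∑ j, (t • (1 : Matrix V₂ V₂ ℝ) - G₂.adjMatrix ℝ).adjugate i j :=
      continuous_finset_sum _ fun i _ => continuous_finset_sum _ fun j _ =>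
        (hS_cont.matrix_adjugate).matrix_elem i j
    set f : ℝ → ℝ := fun t =>
      (t • (1 : Matrix _ _ ℝ) - (sencCorona G₁ G₂).adjMatrix ℝ).det with hf_def
    have hf : Continuous f :=
      ((continuous_id.smul continuous_const).sub continuous_const).matrix_det
    set g : ℝ → ℝ := fun t => t ^ (Fintype.card ↑G₁.edgeSet - Fintype.card V₁) *
      ((t • (1 : Matrix V₂ V₂ ℝ) - G₂.adjMatrix ℝ).det) ^ (Fintype.card ↑G₁.edgeSet) *
      ∏ i ∈ Finset.range (Fintype.card V₁),
        (t ^ 2 - (1 + t * (((t • (1 : Matrix V₂ V₂ ℝ) - G₂.adjMatrix ℝ).det)⁻¹ *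
          ∑ i, ∑ j, (t • (1 : Matrix V₂ V₂ ℝ) - G₂.adjMatrix ℝ).adjugate i j)) * (α i + r₁))
      with hg_def
    have hg0 : ContinuousAt g 0 := by
      refine ContinuousAt.mul (ContinuousAt.mul ((continuous_pow _).continuousAt)
        ((hdS.pow _).continuousAt)) ?_
      refine tendsto_finset_prod _ fun i _ => ?_
      exact ((continuous_pow 2).continuousAt).sub
        ((continuousAt_const.add (continuousAt_id.mul
          ((hdS.continuousAt.inv₀ hx).mul haS.continuousAt))).mul continuousAt_const)
    have hO : ∀ᶠ t in nhdsWithin (0 : ℝ) {t | t ≠ 0},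
        ((t • (1 : Matrix V₂ V₂ ℝ) - G₂.adjMatrix ℝ).det) ≠ 0 :=
      (hdS.continuousAt.eventually_ne hx).filter_mono nhdsWithin_le_nhds
    have hev : f =ᶠ[nhdsWithin (0 : ℝ) {t | t ≠ 0}] g := by
      filter_upwards [hO, self_mem_nhdsWithin] with t hdt hne
      simp only [hf_def, hg_def]
      rw [SencProof.key_ne G₁ G₂ r₁ hreg hmn α hα t hdt hne, SencProof.coronal_eq]
    have h1 : Filter.Tendsto f (nhdsWithin (0 : ℝ) {t | t ≠ 0}) (nhds (f 0)) :=
      (hf.continuousAt).mono_left nhdsWithin_le_nhds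
    have h2 : Filter.Tendsto f (nhdsWithin (0 : ℝ) {t | t ≠ 0}) (nhds (g 0)) :=
      (hg0.mono_left nhdsWithin_le_nhds).congr' hev.symm
    haveI : (nhdsWithin (0 : ℝ) {t | t ≠ 0}).NeBot :=
      inferInstanceAs (nhdsWithin (0 : ℝ) {(0 : ℝ)}ᶜ).NeBot
    have hfg : f 0 = g 0 := tendsto_nhds_unique h1 h2
    rw [SencProof.coronal_eq]
    exact hfg
  · exact SencProof.key_ne G₁ G₂ r₁ hreg hmn α hα x hx hx0
end
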